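/- arXiv:math/0609475 — 5 statements merged into one kernel-verified Lean document; each statement's English description precedes it below -/
import Mathlib

section
/- Let n ≥ 1. Every tree with n vertices has at least binomial(n+1, 2) = n(n+1)/2 subtrees, and the path P_n is the unique minimizer: if T is a tree with n vertices that is not isomorphic to the path P_n, then χ(T) > n(n+1)/2. -/
/-!
In a tree, every pair `{u, v}` (with `u = v` allowed) spans the vertex set of the unique
`u`–`v` path, which is a subtree, and the pair is recovered from that set as its vertices
with at most one neighbour inside it. This injects `Sym2 V`, of size `n(n+1)/2`, into the
subtrees. If no subtree were missed, the whole vertex set would be such a path, i.e. the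
tree would have a Hamiltonian path, and by acyclicity its only edges are the path edges.
-/

open SimpleGraph

/-- `S` is the vertex set of a subtree of `G`: a nonempty set of vertices
whose induced subgraph is connected. -/
def SimpleGraph.IsSubtree {V : Type*} (G : SimpleGraph V) (S : Finset V) : Prop :=
  S.Nonempty ∧ (G.induce (S : Set V)).Connected

/-- `χ(G)`: the number of subtrees of `G`. -/
noncomputable def SimpleGraph.subtreeCount {V : Type*} (G : SimpleGraph V) : ℕ :=
  Nat.card {S : Finset V // G.IsSubtree S}

namespace SimpleGraph

variable {V : Type*} {G : SimpleGraph V}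

lemma isSubtree_support_toFinset [DecidableEq V] {u v : V} (p : G.Walk u v) :
    G.IsSubtree p.support.toFinset := by
  refine ⟨⟨u, by simp⟩, ?_⟩
  rw [List.coe_toFinset]
  exact p.connected_induce_support

lemma Connected.isSubtree_univ [Fintype V] (hG : G.Connected) : G.IsSubtree Finset.univ := by
  obtain ⟨v⟩ := hG.nonempty
  refine ⟨⟨v, Finset.mem_univ v⟩, ?_⟩
  rw [Finset.coe_univ, G.induceUnivIso.connected_iff]
  exact hG

namespace Walk

lemma IsPath.exists_adj_adj_of_mem_support {u v x : V} {p : G.Walk u v} (hp : p.IsPath)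
    (hx : x ∈ p.support) (hxu : x ≠ u) (hxv : x ≠ v) :
    ∃ a ∈ p.support, ∃ b ∈ p.support, a ≠ b ∧ G.Adj x a ∧ G.Adj x b := by
  obtain ⟨i, rfl, hi⟩ := mem_support_iff_exists_getVert.mp hx
  have hi0 : i ≠ 0 := by rintro rfl; exact hxu p.getVert_zero
  have hil : i < p.length := lt_of_le_of_ne hi (by rintro rfl; exact hxv p.getVert_length)
  refine ⟨p.getVert (i - 1), p.getVert_mem_support _, p.getVert (i + 1), p.getVert_mem_support _,
    fun h => ?_, ?_, p.adj_getVert_succ hil⟩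
  · have := hp.getVert_injOn (by omega : i - 1 ≤ p.length) (by omega : i + 1 ≤ p.length) h
    omega
  · simpa [Nat.sub_add_cancel (Nat.pos_of_ne_zero hi0)] using
      (p.adj_getVert_succ (i := i - 1) (by omega)).symm

end Walk

namespace IsAcyclic

variable {u v : V} {p : G.Walk u v}

lemma mem_sym2_iff_of_isPath (hG : G.IsAcyclic) (hp : p.IsPath) {x : V} :
    x ∈ s(u, v) ↔ x ∈ p.support ∧
      ∀ a ∈ p.support, ∀ b ∈ p.support, G.Adj x a → G.Adj x b → a = b := by
  constructor
  · rw [Sym2.mem_iff]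
    rintro (rfl | rfl)
    · refine ⟨p.start_mem_support, fun a ha b hb hxa hxb => ?_⟩
      rw [hG.eq_snd_of_adj_start hp hxa ha, hG.eq_snd_of_adj_start hp hxb hb]
    · refine ⟨p.end_mem_support, fun a ha b hb hxa hxb => ?_⟩
      rw [hG.eq_penultimate_of_adj_end hp hxa ha, hG.eq_penultimate_of_adj_end hp hxb hb]
  · rintro ⟨hx, hends⟩
    by_contra hxuv
    obtain ⟨a, ha, b, hb, hab, hxa, hxb⟩ := hp.exists_adj_adj_of_mem_support hx
      (fun h => hxuv (h ▸ Sym2.mem_mk_left x v)) (fun h => hxuv (h ▸ Sym2.mem_mk_right u x))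
    exact hab (hends a ha b hb hxa hxb)

lemma sym2_eq_of_support_toFinset_eq (hG : G.IsAcyclic) [DecidableEq V] {u' v' : V}
    {q : G.Walk u' v'} (hp : p.IsPath) (hq : q.IsPath)
    (h : p.support.toFinset = q.support.toFinset) :
    s(u, v) = s(u', v') :=
  Sym2.ext fun x => by
    simp only [hG.mem_sym2_iff_of_isPath hp, hG.mem_sym2_iff_of_isPath hq, ← List.mem_toFinset,
      h]

lemma adj_getVert_iff (hG : G.IsAcyclic) (hp : p.IsPath) {i j : ℕ} (hi : i ≤ p.length)
    (hj : j ≤ p.length) :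
    G.Adj (p.getVert i) (p.getVert j) ↔ i + 1 = j ∨ j + 1 = i := by
  have forward {i j : ℕ} (hij : i < j) (hj : j ≤ p.length)
      (h : G.Adj (p.getVert i) (p.getVert j)) : i + 1 = j := by
    have hsnd : p.getVert j = (p.drop i).snd := by
      refine hG.eq_snd_of_adj_start (hp.drop i) h ?_
      simpa [Walk.drop_getVert, Nat.add_sub_cancel' hij.le] using
        (p.drop i).getVert_mem_support (j - i)
    rw [Walk.snd, Walk.drop_getVert] at hsnd
    exact (hp.getVert_injOn (by omega : j ≤ p.length) (by omega : i + 1 ≤ p.length) hsnd).symm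
  refine ⟨fun h => ?_, ?_⟩
  · rcases lt_trichotomy i j with hij | rfl | hij
    · exact Or.inl (forward hij hj h)
    · exact (G.irrefl h).elim
    · exact Or.inr (forward hij hi h.symm)
  · rintro (rfl | rfl)
    · exact p.adj_getVert_succ (by omega)
    · exact (p.adj_getVert_succ (by omega)).symm

lemma nonempty_iso_pathGraph (hG : G.IsAcyclic) [Fintype V] [DecidableEq V]
    (hp : p.IsHamiltonian) : Nonempty (G ≃g pathGraph (Fintype.card V)) := by
  rw [← hp.length_support]
  refine ⟨Iso.symm
    { toEquiv := hp.getVertEquiv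
      map_rel_iff' := fun {i j} => ?_ }⟩
  rw [pathGraph_adj]
  simp only [Walk.IsHamiltonian.getVertEquiv_apply, Function.comp_apply]
  exact hG.adj_getVert_iff hp.isPath (by simpa using i.is_lt) (by simpa using j.is_lt)

end IsAcyclic

namespace IsTree

variable [DecidableEq V] (hG : G.IsTree)

noncomputable def pathFinset (u v : V) : Finset V :=
  (hG.existsUnique_path u v).exists.choose.support.toFinset

lemma pathFinset_eq {u v : V} {p : G.Walk u v} (hp : p.IsPath) :
    hG.pathFinset u v = p.support.toFinset := by
  have hpaths := hG.existsUnique_path u v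
  rw [pathFinset, hpaths.unique hpaths.exists.choose_spec hp]

lemma pathFinset_comm (u v : V) : hG.pathFinset u v = hG.pathFinset v u := by
  obtain ⟨p, hp, -⟩ := hG.existsUnique_path u v
  rw [hG.pathFinset_eq hp, hG.pathFinset_eq hp.reverse, Walk.support_reverse,
    List.toFinset_reverse]

lemma exists_isPath_pathFinset_eq (u v : V) :
    ∃ p : G.Walk u v, p.IsPath ∧ hG.pathFinset u v = p.support.toFinset := by
  obtain ⟨p, hp, -⟩ := hG.existsUnique_path u v
  exact ⟨p, hp, hG.pathFinset_eq hp⟩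

noncomputable def pathSubtree : Sym2 V → {S : Finset V // G.IsSubtree S} :=
  Sym2.lift ⟨fun u v => ⟨hG.pathFinset u v, by
    obtain ⟨p, -, hpS⟩ := hG.exists_isPath_pathFinset_eq u v
    exact hpS ▸ isSubtree_support_toFinset p⟩,
    fun u v => Subtype.ext (hG.pathFinset_comm u v)⟩

lemma pathSubtree_injective : Function.Injective hG.pathSubtree := by
  intro s t hst
  induction s with | _ u v => induction t with | _ u' v' =>
  obtain ⟨p, hp, hpS⟩ := hG.exists_isPath_pathFinset_eq u v
  obtain ⟨q, hq, hqS⟩ := hG.exists_isPath_pathFinset_eq u' v'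
  have hS := congrArg Subtype.val hst
  simp only [pathSubtree, Sym2.lift_mk, hpS, hqS] at hS
  exact hG.isAcyclic.sym2_eq_of_support_toFinset_eq hp hq hS

lemma nonempty_iso_pathGraph_of_surjective_pathSubtree [Fintype V]
    (h : Function.Surjective hG.pathSubtree) : Nonempty (G ≃g pathGraph (Fintype.card V)) := by
  obtain ⟨s, hs⟩ := h ⟨Finset.univ, hG.connected.isSubtree_univ⟩
  induction s with | _ u v =>
  obtain ⟨p, hp, hpS⟩ := hG.exists_isPath_pathFinset_eq u v
  have huniv : p.support.toFinset = Finset.univ := by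
    rw [← hpS]; exact congrArg Subtype.val hs
  exact hG.isAcyclic.nonempty_iso_pathGraph
    (hp.isHamiltonian_of_mem fun w => List.mem_toFinset.mp (huniv ▸ Finset.mem_univ w))

end IsTree

end SimpleGraph

theorem path_minimizes_subtree_count_general {n : ℕ} {V : Type*} [Fintype V]
    (G : SimpleGraph V) (hG : G.IsTree) (hcard : Fintype.card V = n) :
    (n + 1).choose 2 ≤ G.subtreeCount ∧
      (¬ Nonempty (G ≃g pathGraph n) → (n + 1).choose 2 < G.subtreeCount) := by
  classical
  subst hcard
  have := Fintype.ofFinite {S : Finset V // G.IsSubtree S}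
  rw [subtreeCount, Nat.card_eq_fintype_card, ← Sym2.card]
  exact ⟨Fintype.card_le_of_injective _ hG.pathSubtree_injective, fun hnot_path =>
    Fintype.card_lt_of_injective_not_surjective _ hG.pathSubtree_injective
      fun h => hnot_path (hG.nonempty_iso_pathGraph_of_surjective_pathSubtree h)⟩

/-- The path `P_n` has `binomial (n+1) 2 = n(n+1)/2` subtrees, fewer than any other
tree on `n` vertices: every tree with `n ≥ 1` vertices has at least `n(n+1)/2`
subtrees, and any such tree not isomorphic to `P_n` has strictly more. -/
theorem path_minimizes_subtree_count {n : ℕ} (hn : 1 ≤ n) {V : Type*} [Fintype V]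
    (G : SimpleGraph V) (hG : G.IsTree) (hcard : Fintype.card V = n) :
    (n + 1).choose 2 ≤ G.subtreeCount ∧
      (¬ Nonempty (G ≃g pathGraph n) → (n + 1).choose 2 < G.subtreeCount) :=
  path_minimizes_subtree_count_general G hG hcard
end

section
/- Let n ≥ 1. Every tree with n vertices has at most 2^{n-1} + n - 1 subtrees, and the star K_{1,n-1} is the unique maximizer: if T is a tree with n vertices that is not isomorphic to the star K_{1,n-1}, then χ(T) < 2^{n-1} + n - 1. -/
/-!
Subtrees with one vertex are the `n` vertices. A subtree with at least two vertices is determined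
by the edges it spans, a nonempty subset of the `n - 1` edges; hence `χ(T) ≤ n + 2^(n-1) - 1`.
If `T` is not a star it has two disjoint edges (in an acyclic graph, edges that pairwise meet
share a common vertex), and no subtree spans exactly these two, so the bound drops by one.
-/

open SimpleGraph

/-- The star with center `c`: `c` is adjacent to every other vertex, and there are
no other edges. -/
def starGraph {V : Type*} (c : V) : SimpleGraph V :=
  SimpleGraph.fromRel (fun a _ => a = c)

open Finset

namespace SimpleGraph

section InducedEdges

variable {V : Type*} {G : SimpleGraph V} [DecidableRel G.Adj]

def inducedEdgeFinset (G : SimpleGraph V) [DecidableRel G.Adj] (S : Finset V) :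
    Finset (Sym2 V) :=
  S.sym2.filter (· ∈ G.edgeSet)

lemma mem_inducedEdgeFinset {S : Finset V} {e : Sym2 V} :
    e ∈ G.inducedEdgeFinset S ↔ e ∈ G.edgeSet ∧ ∀ v ∈ e, v ∈ S := by
  rw [inducedEdgeFinset, mem_filter, mem_sym2_iff, and_comm]

lemma inducedEdgeFinset_subset_edgeFinset [Fintype V] (S : Finset V) :
    G.inducedEdgeFinset S ⊆ G.edgeFinset :=
  fun _ he => mem_edgeFinset.2 (mem_inducedEdgeFinset.1 he).1

lemma induce_adj_mem_inducedEdgeFinset {S : Finset V} {u w : (S : Set V)}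
    (h : (G.induce (S : Set V)).Adj u w) : s((u : V), (w : V)) ∈ G.inducedEdgeFinset S :=
  mem_inducedEdgeFinset.2 ⟨h, by simp⟩

namespace IsSubtree

variable {S : Finset V}

lemma mem_iff_exists_mem_inducedEdgeFinset (hS : G.IsSubtree S) (h2 : 2 ≤ #S) {v : V} :
    v ∈ S ↔ ∃ e ∈ G.inducedEdgeFinset S, v ∈ e := by
  refine ⟨fun hv => ?_, fun ⟨e, he, hve⟩ => (mem_inducedEdgeFinset.1 he).2 v hve⟩
  obtain ⟨u, hu, hvu⟩ := exists_mem_ne h2 v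
  obtain ⟨p⟩ := hS.2 ⟨v, hv⟩ ⟨u, hu⟩
  have hp : ¬ p.Nil := Walk.not_nil_of_ne (by simp [Subtype.ext_iff, hvu.symm])
  exact ⟨_, induce_adj_mem_inducedEdgeFinset (p.adj_snd hp), Sym2.mem_mk_left _ _⟩

lemma inducedEdgeFinset_nonempty (hS : G.IsSubtree S) (h2 : 2 ≤ #S) :
    (G.inducedEdgeFinset S).Nonempty := by
  obtain ⟨v, hv⟩ := hS.1
  obtain ⟨e, he, -⟩ := (hS.mem_iff_exists_mem_inducedEdgeFinset h2).1 hv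
  exact ⟨e, he⟩

/-- A walk inside `S` from `e₁` to `e₂` has to leave `e₁` along a third edge. -/
lemma inducedEdgeFinset_ne_pair [DecidableEq V] (hS : G.IsSubtree S) {e₁ e₂ : Sym2 V}
    (hd : ∀ v ∈ e₁, v ∉ e₂) : G.inducedEdgeFinset S ≠ {e₁, e₂} := by
  intro h
  have he₁ : e₁ ∈ G.inducedEdgeFinset S := h ▸ mem_insert_self _ _
  have he₂ : e₂ ∈ G.inducedEdgeFinset S := h ▸ mem_insert_of_mem (mem_singleton_self _)
  obtain ⟨p⟩ := hS.2 ⟨_, (mem_inducedEdgeFinset.1 he₁).2 _ e₁.out_fst_mem⟩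
    ⟨_, (mem_inducedEdgeFinset.1 he₂).2 _ e₂.out_fst_mem⟩
  obtain ⟨d, -, hd₁, hd₂⟩ := p.exists_boundary_dart {x | (x : V) ∈ e₁} e₁.out_fst_mem
    (hd _ · e₂.out_fst_mem)
  have hdS := induce_adj_mem_inducedEdgeFinset d.adj
  rw [h, mem_insert, mem_singleton] at hdS
  rcases hdS with hdS | hdS
  · exact hd₂ (hdS ▸ Sym2.mem_mk_right _ _)
  · exact hd _ hd₁ (hdS ▸ Sym2.mem_mk_left _ _)

end IsSubtree

lemma inducedEdgeFinset_injOn :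
    Set.InjOn G.inducedEdgeFinset {S | G.IsSubtree S ∧ 2 ≤ #S} := by
  rintro S ⟨hS, h2⟩ S' ⟨hS', h2'⟩ h
  ext v
  rw [hS.mem_iff_exists_mem_inducedEdgeFinset h2, hS'.mem_iff_exists_mem_inducedEdgeFinset h2', h]

end InducedEdges

section Counting

variable {V : Type*} [Fintype V] {G : SimpleGraph V} [DecidableRel G.Adj]

lemma subtreeCount_le_card_add_card {T : Finset (Finset (Sym2 V))}
    (hT : ∀ S, G.IsSubtree S → 2 ≤ #S → G.inducedEdgeFinset S ∈ T) :
    G.subtreeCount ≤ Fintype.card V + #T := by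
  classical
  rw [subtreeCount, Nat.card_eq_fintype_card, Fintype.card_subtype,
    ← card_filter_add_card_filter_not (fun S => #S < 2)]
  gcongr
  · calc _ ≤ #(powersetCard 1 (univ : Finset V)) := by
          refine card_le_card fun S hS => ?_
          simp only [mem_filter, mem_univ, true_and] at hS
          have := hS.1.1.card_pos
          exact mem_powersetCard.2 ⟨subset_univ S, by omega⟩
      _ = Fintype.card V := by simp
  · have hbig : ∀ S ∈ univ.filter (G.IsSubtree ·) |>.filter (¬ #· < 2),
        G.IsSubtree S ∧ 2 ≤ #S := fun S hS => by
      simp only [mem_filter, mem_univ, true_and, not_lt] at hS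
      exact hS
    exact card_le_card_of_injOn G.inducedEdgeFinset
      (fun S hS => hT S (hbig S hS).1 (hbig S hS).2) (inducedEdgeFinset_injOn.mono hbig)

lemma subtreeCount_add_one_le [DecidableEq V] :
    G.subtreeCount + 1 ≤ Fintype.card V + 2 ^ #G.edgeFinset := by
  have h := subtreeCount_le_card_add_card (G := G) (T := G.edgeFinset.powerset.erase ∅)
    fun S hS h2 => mem_erase.2 ⟨(hS.inducedEdgeFinset_nonempty h2).ne_empty,
      mem_powerset.2 (inducedEdgeFinset_subset_edgeFinset S)⟩
  rw [card_erase_of_mem (empty_mem_powerset _), card_powerset] at h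
  have := Nat.one_le_two_pow (n := #G.edgeFinset)
  generalize 2 ^ #G.edgeFinset = m at *
  omega

lemma subtreeCount_add_two_le [DecidableEq V] {e₁ e₂ : Sym2 V} (he₁ : e₁ ∈ G.edgeSet)
    (he₂ : e₂ ∈ G.edgeSet) (hd : ∀ v ∈ e₁, v ∉ e₂) :
    G.subtreeCount + 2 ≤ Fintype.card V + 2 ^ #G.edgeFinset := by
  have hpair : {e₁, e₂} ∈ G.edgeFinset.powerset.erase ∅ :=
    mem_erase.2 ⟨insert_ne_empty _ _, mem_powerset.2 (by simp [insert_subset_iff, he₁, he₂])⟩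
  have h := subtreeCount_le_card_add_card (G := G)
    (T := (G.edgeFinset.powerset.erase ∅).erase {e₁, e₂})
    fun S hS h2 => mem_erase.2 ⟨hS.inducedEdgeFinset_ne_pair hd,
      mem_erase.2 ⟨(hS.inducedEdgeFinset_nonempty h2).ne_empty,
        mem_powerset.2 (inducedEdgeFinset_subset_edgeFinset S)⟩⟩
  rw [card_erase_of_mem hpair, card_erase_of_mem (empty_mem_powerset _), card_powerset] at h
  have := Nat.one_lt_two_pow (card_pos.2 ⟨e₁, mem_edgeFinset.2 he₁⟩).ne'
  generalize 2 ^ #G.edgeFinset = m at *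
  omega

end Counting

section Star

variable {V : Type*} {G : SimpleGraph V}

lemma IsAcyclic.cliqueFree_three (hG : G.IsAcyclic) : G.CliqueFree 3 := fun s hs => by
  obtain ⟨u, w, hw, -⟩ := is3Clique_iff_exists_cycle_length_three.1 ⟨s, hs⟩
  exact hG w hw

/-- Without a common vertex, three of the pairwise meeting edges would form a triangle. -/
lemma IsAcyclic.exists_forall_mem_edgeSet [Nonempty V] (hG : G.IsAcyclic)
    (hmeet : ∀ e ∈ G.edgeSet, ∀ f ∈ G.edgeSet, ∃ v ∈ e, v ∈ f) :
    ∃ c, ∀ e ∈ G.edgeSet, c ∈ e := by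
  classical
  have hother : ∀ {a b : V} {e : Sym2 V}, G.Adj a b → e ∈ G.edgeSet → b ∉ e → a ∈ e := by
    intro a b e hab he hbe
    obtain ⟨w, hw, hwe⟩ := hmeet s(a, b) hab e he
    rcases Sym2.mem_iff.1 hw with rfl | rfl
    exacts [hwe, absurd hwe hbe]
  by_contra! hno
  obtain ⟨e₀, he₀, -⟩ := hno (Classical.arbitrary V)
  induction e₀ using Sym2.ind with | _ a b => ?_
  have hab : G.Adj a b := he₀
  obtain ⟨f, hf, haf⟩ := hno a
  obtain ⟨e, he, hbe⟩ := hno b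
  obtain ⟨x, rfl⟩ := Sym2.mem_iff_exists.1 (hother hab.symm hf haf)
  have hbx : G.Adj b x := hf
  have hax : a ≠ x := fun h => haf (h ▸ Sym2.mem_mk_right _ _)
  have hax' : s(a, x) ∈ G.edgeSet :=
    (Sym2.mem_and_mem_iff hax).1 ⟨hother hab he hbe, hother hbx.symm he hbe⟩ ▸ he
  exact hG.cliqueFree_three _ (is3Clique_triple_iff.2 ⟨hab, hax', hbx⟩)

lemma Preconnected.eq_starGraph (hG : G.Preconnected) {c : V}
    (hc : ∀ e ∈ G.edgeSet, c ∈ e) : G = starGraph c := by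
  have hadj : ∀ y ≠ c, G.Adj y c := by
    intro y hy
    obtain ⟨p⟩ := hG y c
    have hp := p.adj_snd (Walk.not_nil_of_ne hy)
    rcases Sym2.mem_iff.1 (hc _ hp) with h | h
    exacts [absurd h.symm hy, h ▸ hp]
  ext x y
  rw [starGraph_adj]
  refine ⟨fun h => ⟨h.ne, (Sym2.mem_iff.1 (hc _ h)).imp Eq.symm Eq.symm⟩, ?_⟩
  rintro ⟨hxy, rfl | rfl⟩
  exacts [(hadj y hxy.symm).symm, hadj x hxy]

def Iso.starGraph {W : Type*} (φ : V ≃ W) (c : V) : starGraph c ≃g starGraph (φ c) :=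
  ⟨φ, by simp⟩

end Star

end SimpleGraph

/-- The star `K_{1,n-1}` has `2^(n-1) + n - 1` subtrees, more than any other tree
on `n` vertices: every tree with `n ≥ 1` vertices has at most `2^(n-1) + n - 1`
subtrees, and any such tree not isomorphic to `K_{1,n-1}` has strictly fewer. -/
theorem star_maximizes_subtree_count {n : ℕ} (hn : 1 ≤ n) {V : Type*} [Fintype V]
    (G : SimpleGraph V) (hG : G.IsTree) (hcard : Fintype.card V = n) :
    G.subtreeCount ≤ 2 ^ (n - 1) + n - 1 ∧
      (¬ Nonempty (G ≃g _root_.starGraph (⟨0, by omega⟩ : Fin n)) →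
        G.subtreeCount < 2 ^ (n - 1) + n - 1) := by
  classical
  have hE : n - 1 = #G.edgeFinset := by have := hG.card_edgeFinset; omega
  rw [hE]
  refine ⟨by have := G.subtreeCount_add_one_le; omega, fun hstar => ?_⟩
  by_cases hmeet : ∀ e ∈ G.edgeSet, ∀ f ∈ G.edgeSet, ∃ v ∈ e, v ∈ f
  · have := hG.connected.nonempty
    obtain ⟨c, hc⟩ := hG.isAcyclic.exists_forall_mem_edgeSet hmeet
    let e := Fintype.equivFinOfCardEq hcard
    let φ := e.trans (Equiv.swap (e c) ⟨0, by omega⟩)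
    have hφ : φ c = ⟨0, by omega⟩ := Equiv.swap_apply_left _ _
    refine absurd ⟨?_⟩ hstar
    rw [hG.connected.preconnected.eq_starGraph hc]
    -- Mathlib's `SimpleGraph.starGraph` has the same definition as `_root_.starGraph`.
    exact hφ ▸ Iso.starGraph φ c
  · push Not at hmeet
    obtain ⟨e₁, he₁, e₂, he₂, hd⟩ := hmeet
    have := G.subtreeCount_add_two_le he₁ he₂ hd
    omega
end

section
/- Let T = (V, E; f, g) be a weighted tree with n > 1 vertices, let u be a pendant (degree-one) vertex of T with pendant edge e = (u, v), and let T' = (V∖{u}, E∖{e}; f', g') be the weighted tree with f'(v) = f(v)(f(u)g(e) + 1), f'(w) = f(w) for all w ≠ v, and g' the restriction of g. Then F(T; f, g) = F(T'; f', g') + f(u). -/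
open SimpleGraph

/-- The weight of a subtree with vertex set `S`: the product of the weights of its
vertices times the product of the weights of the edges of `G` joining two vertices
of `S`. -/
noncomputable def SimpleGraph.subtreeWeight {V R : Type*} [CommRing R]
    (G : SimpleGraph V) (f : V → R) (g : Sym2 V → R) (S : Finset V) : R :=
  (∏ v ∈ S, f v) * ∏ᶠ e ∈ {e : Sym2 V | e ∈ G.edgeSet ∧ ∀ x ∈ e, x ∈ S}, g e

/-- `F(G; f, g)`: the sum of the weights of all subtrees of `G`. -/
noncomputable def SimpleGraph.subtreeSum {V R : Type*} [CommRing R]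
    (G : SimpleGraph V) (f : V → R) (g : Sym2 V → R) : R :=
  ∑ᶠ S ∈ {S : Finset V | G.IsSubtree S}, G.subtreeWeight f g S

/-- `F(G; f, g; w)`: the sum of the weights of all subtrees of `G` containing `w`. -/
noncomputable def SimpleGraph.subtreeSumAt {V R : Type*} [CommRing R]
    (G : SimpleGraph V) (f : V → R) (g : Sym2 V → R) (w : V) : R :=
  ∑ᶠ S ∈ {S : Finset V | G.IsSubtree S ∧ w ∈ S}, G.subtreeWeight f g S

/-- `F(G; f, g; w₁, w₂)`: the sum of the weights of all subtrees of `G` containing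
both `w₁` and `w₂`. -/
noncomputable def SimpleGraph.subtreeSumAt2 {V R : Type*} [CommRing R]
    (G : SimpleGraph V) (f : V → R) (g : Sym2 V → R) (w₁ w₂ : V) : R :=
  ∑ᶠ S ∈ {S : Finset V | G.IsSubtree S ∧ w₁ ∈ S ∧ w₂ ∈ S}, G.subtreeWeight f g S

/-!
Split the subtrees of `G` according to whether they contain the pendant vertex `u`. Those
avoiding `u` are exactly the subtrees of `G - u`. Those containing `u` are `{u}`, of weight
`f u`, and the sets `insert u T` with `T` a subtree of `G - u` through `v`; as `uv` is the only
edge at `u`, such a set has weight `f u * g(uv) * ω(T)`. On the other side, multiplying the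
weight of `v` by `f u * g(uv) + 1` adds exactly `f u * g(uv) * ω(T)` for each subtree `T`
through `v`.
-/

lemma Finset.image_map_subtype_setOf {V : Type*} {s : Set V} (P : Finset V → Prop) :
    Finset.map (.subtype (· ∈ s)) '' {S : Finset s | P (S.map (.subtype (· ∈ s)))} =
      {S | P S ∧ ↑S ⊆ s} := by
  classical
  ext S
  constructor
  · rintro ⟨S', hS', rfl⟩
    exact ⟨hS', Finset.map_subtype_subset S'⟩
  · rintro ⟨hS, hsub⟩
    have hmap := Finset.subtype_map_of_mem (p := (· ∈ s)) fun x hx => hsub hx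
    exact ⟨S.subtype (· ∈ s), by rwa [Set.mem_ofPred_eq, hmap], hmap⟩

namespace SimpleGraph

variable {V R : Type*} [CommRing R] {G : SimpleGraph V}

noncomputable def induceInduceIso (G : SimpleGraph V) (s : Set V) (t : Set s) :
    (G.induce s).induce t ≃g G.induce (Subtype.val '' t) where
  toEquiv := Equiv.Set.image Subtype.val t Subtype.val_injective
  map_rel_iff' := Iff.rfl

lemma isSubtree_induce_iff {s : Set V} {S : Finset s} :
    (G.induce s).IsSubtree S ↔ G.IsSubtree (S.map (Function.Embedding.subtype (· ∈ s))) := by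
  unfold IsSubtree
  rw [Finset.map_nonempty, Finset.coe_map, Function.Embedding.coe_subtype,
    (G.induceInduceIso s S).connected_iff]

lemma isSubtree_singleton (w : V) : G.IsSubtree {w} := by
  refine ⟨Finset.singleton_nonempty w, ?_⟩
  rw [Finset.coe_singleton, induce_singleton_eq_top]
  exact connected_top

lemma IsSubtree.insert_of_adj [DecidableEq V] {S : Finset V} {u v : V} (hS : G.IsSubtree S)
    (hvS : v ∈ S) (huv : G.Adj u v) : G.IsSubtree (insert u S) := by
  refine ⟨Finset.insert_nonempty u S, ?_⟩
  rw [Finset.coe_insert, Set.insert_eq]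
  exact connected_induce_union (by rw [induce_singleton_eq_top]; exact preconnected_top)
    hS.2.preconnected rfl hvS huv

lemma IsSubtree.exists_adj_mem [DecidableEq V] {S : Finset V} {u : V} (hS : G.IsSubtree S)
    (huS : u ∈ S) (hne : (S.erase u).Nonempty) : ∃ w ∈ S, G.Adj u w := by
  obtain ⟨w, hw⟩ := hne
  have : Nontrivial (S : Set V) :=
    ⟨⟨⟨u, huS⟩, ⟨w, Finset.mem_of_mem_erase hw⟩, fun h => Finset.ne_of_mem_erase hw
      (congrArg Subtype.val h).symm⟩⟩
  obtain ⟨⟨x, hx⟩, hadj⟩ := hS.2.preconnected.exists_adj_of_nontrivial ⟨u, huS⟩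
  exact ⟨x, hx, hadj⟩

lemma IsSubtree.erase_of_subsingleton_neighborSet [DecidableEq V] {S : Finset V} {u : V}
    (hS : G.IsSubtree S) (hu : (G.neighborSet u).Subsingleton) (hne : (S.erase u).Nonempty) :
    G.IsSubtree (S.erase u) := by
  refine ⟨hne, ?_⟩
  have hpre : ((G.induce S).induce {x | x.1 ≠ u}).Preconnected := by
    refine hS.2.preconnected.induce_of_degree_eq_one fun x hx => ?_
    obtain rfl : x.1 = u := not_not.mp hx
    exact hu.preimage Subtype.val_injective
  have himage : Subtype.val '' {x : (S : Set V) | x.1 ≠ u} = ↑(S.erase u) := by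
    ext; simp [and_comm]
  rw [connected_iff, ← himage, ← (G.induceInduceIso _ _).preconnected_iff, himage]
  exact ⟨hpre, hne.coe_sort⟩

lemma setOf_isSubtree_eq_of_neighborSet_eq [DecidableEq V] {u v : V}
    (hu : G.neighborSet u = {v}) :
    {S | G.IsSubtree S} = insert {u} (insert u '' {S | (G.IsSubtree S ∧ v ∈ S) ∧ u ∉ S}) ∪
      {S | G.IsSubtree S ∧ u ∉ S} := by
  have huv : G.Adj u v := (Set.ext_iff.1 hu v).2 rfl
  ext S
  by_cases huS : u ∈ S
  · simp only [Set.mem_ofPred_eq, Set.mem_union, Set.mem_insert_iff, Set.mem_image, huS,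
      not_true_eq_false, and_false, or_false]
    constructor
    · intro hS
      by_cases hne : (S.erase u).Nonempty
      · obtain ⟨w, hwS, huw⟩ := hS.exists_adj_mem huS hne
        obtain rfl : w = v := (Set.ext_iff.1 hu w).1 huw
        refine Or.inr ⟨S.erase u, ⟨⟨hS.erase_of_subsingleton_neighborSet ?_ hne, ?_⟩,
          Finset.notMem_erase u S⟩, Finset.insert_erase huS⟩
        · exact hu ▸ Set.subsingleton_singleton
        · exact Finset.mem_erase.2 ⟨(G.ne_of_adj huv).symm, hwS⟩
      · exact Or.inl ((Finset.erase_eq_empty_iff S u).1 (Finset.not_nonempty_iff_eq_empty.1 hne)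
          |>.resolve_left (Finset.ne_empty_of_mem huS))
    · rintro (rfl | ⟨T, ⟨⟨hT, hvT⟩, -⟩, rfl⟩)
      · exact isSubtree_singleton u
      · exact hT.insert_of_adj hvT huv
  · have hS_ne : S ≠ {u} := fun h => huS (h ▸ Finset.mem_singleton_self u)
    simp only [Set.mem_ofPred_eq, Set.mem_union, Set.mem_insert_iff, hS_ne, Set.mem_image,
      false_or, huS, not_false_eq_true, and_true, iff_or_self, forall_exists_index, and_imp]
    rintro T - - - rfl
    exact absurd (Finset.mem_insert_self u T) huS

lemma finite_setOf_edge_forall_mem (S : Finset V) :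
    {e : Sym2 V | e ∈ G.edgeSet ∧ ∀ x ∈ e, x ∈ S}.Finite :=
  S.sym2.finite_toSet.subset fun _ he => Finset.mem_sym2_iff.2 he.2

lemma subtreeWeight_singleton (f : V → R) (g : Sym2 V → R) (w : V) :
    G.subtreeWeight f g {w} = f w := by
  have hnone : {e : Sym2 V | e ∈ G.edgeSet ∧ ∀ x ∈ e, x ∈ ({w} : Finset V)} = ∅ := by
    refine Set.eq_empty_of_forall_notMem fun e ⟨he, hw⟩ => G.not_isDiag_of_mem_edgeSet he ?_
    induction e using Sym2.ind with
    | _ a b => simp_all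
  rw [subtreeWeight, hnone, finprod_mem_empty, Finset.prod_singleton, mul_one]

lemma subtreeWeight_insert_of_neighborSet_eq [DecidableEq V] (f : V → R) (g : Sym2 V → R)
    {S : Finset V} {u v : V} (hu : G.neighborSet u = {v}) (huS : u ∉ S) (hvS : v ∈ S) :
    G.subtreeWeight f g (insert u S) = f u * g s(u, v) * G.subtreeWeight f g S := by
  have hadj (w : V) : G.Adj u w ↔ w = v := Set.ext_iff.1 hu w
  have hedges : {e | e ∈ G.edgeSet ∧ ∀ x ∈ e, x ∈ insert u S} =
      insert s(u, v) {e | e ∈ G.edgeSet ∧ ∀ x ∈ e, x ∈ S} := by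
    ext e
    induction e using Sym2.ind with
    | _ a b =>
      simp only [Set.mem_insert_iff, Set.mem_ofPred_eq, mem_edgeSet, Sym2.mem_iff,
        forall_eq_or_imp, forall_eq, Finset.mem_insert, Sym2.eq_iff]
      grind [G.adj_comm a b, G.ne_of_adj (a := a) (b := b)]
  have huv : s(u, v) ∉ {e | e ∈ G.edgeSet ∧ ∀ x ∈ e, x ∈ S} :=
    fun h => huS (h.2 u (Sym2.mem_mk_left u v))
  rw [subtreeWeight, subtreeWeight, hedges,
    finprod_mem_insert _ huv (finite_setOf_edge_forall_mem S), Finset.prod_insert huS]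
  ring

lemma subtreeWeight_induce (s : Set V) (f : V → R) (g : Sym2 V → R) (S : Finset s) :
    (G.induce s).subtreeWeight (fun w => f w) (fun e => g (e.map Subtype.val)) S =
      G.subtreeWeight f g (S.map (Function.Embedding.subtype (· ∈ s))) := by
  have hedges : {e : Sym2 V | e ∈ G.edgeSet ∧ ∀ x ∈ e, x ∈ S.map (.subtype (· ∈ s))} =
      Sym2.map Subtype.val '' {e | e ∈ (G.induce s).edgeSet ∧ ∀ x ∈ e, x ∈ S} := by
    ext e
    constructor
    · rintro ⟨he, hmem⟩
      induction e using Sym2.ind with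
      | _ a b =>
        obtain ⟨a', ha', rfl⟩ := Finset.mem_map.1 (hmem a (Sym2.mem_mk_left a b))
        obtain ⟨b', hb', rfl⟩ := Finset.mem_map.1 (hmem _ (Sym2.mem_mk_right _ b))
        exact ⟨s(a', b'), ⟨he, by simp [ha', hb']⟩, rfl⟩
    · rintro ⟨e, ⟨he, hmem⟩, rfl⟩
      induction e using Sym2.ind with
      | _ a b => exact ⟨he, by simpa using hmem⟩
  rw [subtreeWeight, subtreeWeight, Finset.prod_map, hedges,
    finprod_mem_image (Sym2.map.injective Subtype.val_injective).injOn]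
  rfl

lemma subtreeWeight_update [DecidableEq V] (f : V → R) (g : Sym2 V → R) (S : Finset V) (v : V)
    (a : R) :
    G.subtreeWeight (Function.update f v (f v * a)) g S =
      G.subtreeWeight f g S * if v ∈ S then a else 1 := by
  rw [subtreeWeight, subtreeWeight, mul_right_comm, ← Finset.prod_ite_eq' S v (fun _ => a)]
  congr 1
  rw [← Finset.prod_mul_distrib]
  refine Finset.prod_congr rfl fun w _ => ?_
  rcases eq_or_ne w v with rfl | hw <;> simp [*]

lemma subtreeSum_induce (s : Set V) (f : V → R) (g : Sym2 V → R) :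
    (G.induce s).subtreeSum (fun w => f w) (fun e => g (e.map Subtype.val)) =
      ∑ᶠ S ∈ {S | G.IsSubtree S ∧ ↑S ⊆ s}, G.subtreeWeight f g S := by
  simp only [subtreeSum, isSubtree_induce_iff, subtreeWeight_induce]
  rw [← Finset.image_map_subtype_setOf, finsum_mem_image (Finset.map_injective _).injOn]

lemma subtreeSumAt_induce (s : Set V) (f : V → R) (g : Sym2 V → R) (w : s) :
    (G.induce s).subtreeSumAt (fun w => f w) (fun e => g (e.map Subtype.val)) w =
      ∑ᶠ S ∈ {S | (G.IsSubtree S ∧ ↑w ∈ S) ∧ ↑S ⊆ s}, G.subtreeWeight f g S := by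
  simp only [subtreeSumAt, isSubtree_induce_iff, subtreeWeight_induce]
  rw [← Finset.image_map_subtype_setOf, finsum_mem_image (Finset.map_injective _).injOn]
  simp_rw [← Finset.mem_map' (Function.Embedding.subtype (· ∈ s)), Function.Embedding.coe_subtype]

lemma subtreeSum_update [Finite V] [DecidableEq V] (f : V → R) (g : Sym2 V → R) (w : V)
    (a : R) :
    G.subtreeSum (Function.update f w (f w * a)) g =
      G.subtreeSum f g + (a - 1) * G.subtreeSumAt f g w := by
  have hfin : {S : Finset V | G.IsSubtree S}.Finite := Set.toFinite _
  rw [subtreeSum, subtreeSum, subtreeSumAt, Set.ofPred_and,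
    ← finsum_mem_inter_add_sdiff {S | w ∈ S} hfin,
    ← finsum_mem_inter_add_sdiff {S | w ∈ S} hfin,
    finsum_mem_congr rfl fun S hS => by rw [subtreeWeight_update, if_pos (show w ∈ S from hS.2)],
    finsum_mem_congr (s := _ \ _) rfl fun S hS => by
      rw [subtreeWeight_update, if_neg (show w ∉ S from hS.2), mul_one],
    ← finsum_mem_mul' _ _ (Set.toFinite _)]
  ring

lemma subtreeSum_eq_of_neighborSet_eq [Finite V] [DecidableEq V] (f : V → R) (g : Sym2 V → R)
    {u v : V} (hu : G.neighborSet u = {v}) :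
    G.subtreeSum f g = f u + ∑ᶠ S ∈ {S | G.IsSubtree S ∧ u ∉ S}, G.subtreeWeight f g S +
      f u * g s(u, v) * ∑ᶠ S ∈ {S | (G.IsSubtree S ∧ v ∈ S) ∧ u ∉ S}, G.subtreeWeight f g S := by
  have hvu : v ≠ u := (G.ne_of_adj ((Set.ext_iff.1 hu v).2 rfl)).symm
  have hsingleton : {u} ∉ insert u '' {S | (G.IsSubtree S ∧ v ∈ S) ∧ u ∉ S} := by
    rintro ⟨T, ⟨⟨-, hvT⟩, -⟩, hT⟩
    exact hvu (Finset.mem_singleton.1 (hT ▸ Finset.mem_insert_of_mem hvT))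
  have hinj : {S | (G.IsSubtree S ∧ v ∈ S) ∧ u ∉ S}.InjOn (insert u) := fun S hS T hT hST => by
    rw [← Finset.erase_insert hS.2, hST, Finset.erase_insert hT.2]
  have hdisj : Disjoint (insert {u} (insert u '' {S | (G.IsSubtree S ∧ v ∈ S) ∧ u ∉ S}))
      {S | G.IsSubtree S ∧ u ∉ S} := by
    refine Set.disjoint_left.2 fun S hS hS' => hS'.2 ?_
    rcases hS with rfl | ⟨T, -, rfl⟩
    exacts [Finset.mem_singleton_self u, Finset.mem_insert_self u T]
  rw [subtreeSum, setOf_isSubtree_eq_of_neighborSet_eq hu,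
    finsum_mem_union hdisj (Set.toFinite _) (Set.toFinite _),
    finsum_mem_insert _ hsingleton (Set.toFinite _), finsum_mem_image hinj,
    subtreeWeight_singleton, mul_finsum_mem' _ _ (Set.toFinite _),
    finsum_mem_congr rfl fun S hS => subtreeWeight_insert_of_neighborSet_eq f g hu hS.2 hS.1.2]
  ring

end SimpleGraph

theorem subtreeSum_pendant_contraction_general {V R : Type*} [Fintype V]
    [CommRing R] (G : SimpleGraph V) [DecidableRel G.Adj]
    (u v : V) (hdeg : G.degree u = 1) (hadj : G.Adj u v) (hvu : v ≠ u)
    (f : V → R) (g : Sym2 V → R)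
    (f' : {w : V // w ≠ u} → R)
    (hf'v : f' ⟨v, hvu⟩ = f v * (f u * g s(u, v) + 1))
    (hf'other : ∀ w : {w : V // w ≠ u}, (w : V) ≠ v → f' w = f (w : V)) :
    G.subtreeSum f g =
      (G.induce {w : V | w ≠ u}).subtreeSum f' (fun e => g (e.map Subtype.val)) + f u := by
  classical
  have hu : G.neighborSet u = {v} := by
    obtain ⟨w, -, huniq⟩ := degree_eq_one_iff_existsUnique_adj.1 hdeg
    ext x
    simp only [mem_neighborSet, Set.mem_singleton_iff]
    exact ⟨fun hx => (huniq x hx).trans (huniq v hadj).symm, fun hx => hx ▸ hadj⟩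
  have hf' : f' = Function.update (fun w : ({w : V | w ≠ u} : Set V) => f w) ⟨v, hvu⟩
      (f v * (f u * g s(u, v) + 1)) := by
    funext w
    by_cases hw : (w : V) = v
    · obtain rfl : w = ⟨v, hvu⟩ := Subtype.ext hw
      rw [hf'v, Function.update_self]
    · rw [hf'other w hw, Function.update_of_ne fun h => hw (congrArg Subtype.val h)]
  have hsub (S : Finset V) : (S : Set V) ⊆ {w | w ≠ u} ↔ u ∉ S :=
    ⟨fun h huS => h huS rfl, fun h w hw hwu => h (hwu ▸ hw)⟩
  rw [hf', subtreeSum_update, subtreeSum_induce, subtreeSumAt_induce,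
    subtreeSum_eq_of_neighborSet_eq f g hu]
  simp only [hsub, add_sub_cancel_right]
  ring

/-- Pendant contraction for the subtree generating function. Let `u` be a pendant
vertex of a weighted tree `G` with pendant edge `(u, v)`, and let `T'` be the tree
obtained by deleting `u` (the induced subgraph on `{w | w ≠ u}`) with the new
vertex-weight `f'` satisfying `f' v = f v * (f u * g s(u,v) + 1)` and `f' w = f w`
elsewhere, and edge weights inherited from `g`. Then
`F(T; f, g) = F(T'; f', g') + f u`. -/
theorem subtreeSum_pendant_contraction {V R : Type*} [Fintype V] [DecidableEq V]
    [CommRing R] (G : SimpleGraph V) [DecidableRel G.Adj]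
    (hG : G.IsTree) (hn : 1 < Fintype.card V)
    (u v : V) (hdeg : G.degree u = 1) (hadj : G.Adj u v) (hvu : v ≠ u)
    (f : V → R) (g : Sym2 V → R)
    (f' : {w : V // w ≠ u} → R)
    (hf'v : f' ⟨v, hvu⟩ = f v * (f u * g s(u, v) + 1))
    (hf'other : ∀ w : {w : V // w ≠ u}, (w : V) ≠ v → f' w = f (w : V)) :
    G.subtreeSum f g =
      (G.induce {w : V | w ≠ u}).subtreeSum f' (fun e => g (e.map Subtype.val)) + f u :=
  subtreeSum_pendant_contraction_general G u v hdeg hadj hvu f g f' hf'v hf'other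
end

section
/- Let d > 1 and let i, k_i, k_{i+1}, …, k_d be nonnegative integers with k_i ≥ 1 and i ≤ (d+1)/2. Let T = T_d(k_i, k_{i+1}, …, k_d) be the tree obtained from the path with vertices v_1, …, v_{d+1} by attaching k_l new pendant vertices to v_l for each l = i, i+1, …, d, and let T* = T_d(k_i + k_{i+1}, k_{i+2}, …, k_d) be the tree obtained from the same path by attaching k_i + k_{i+1} new pendant vertices to v_{i+1} and k_l new pendant vertices to v_l for each l = i+2, …, d. Then χ(T) ≤ χ(T*), with equality if and only if k_{i+1} = k_{i+2} = … = k_d = 0, d is odd, and i = (d+1)/2. -/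
open SimpleGraph

/-- The caterpillar tree obtained from the path with vertices `v_1, …, v_{d+1}`
(vertex `v_l` is `l - 1 : Fin (d+1)`) by attaching `k l` new pendant vertices to
`v_l` for each `l = 1, …, d + 1`. -/
def caterpillar (d : ℕ) (k : ℕ → ℕ) :
    SimpleGraph (Fin (d + 1) ⊕ (Σ l : Fin (d + 1), Fin (k ((l : ℕ) + 1)))) where
  Adj a b :=
    match a, b with
    | Sum.inl a, Sum.inl b => (a : ℕ) + 1 = b ∨ (b : ℕ) + 1 = a
    | Sum.inl a, Sum.inr p => p.1 = a
    | Sum.inr p, Sum.inl b => p.1 = b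
    | Sum.inr _, Sum.inr _ => False
  symm := by
    constructor
    rintro (a | a) (b | b) h
    · exact Or.symm h
    · exact h
    · exact h
    · exact h
  loopless := by
    constructor
    rintro (a | a) h
    · omega
    · exact h

/-!
A subtree of the caterpillar is either a single pendant vertex, or it is determined by the
spine segment `v_{a+1}, …, v_b` it contains together with an arbitrary set of pendants attached
to that segment. Hence `χ = (number of pendants) + ∑_{0 ≤ a < b ≤ d+1} 2 ^ (k_{a+1} + ⋯ + k_b)`.

Moving the `k_i` pendants of `v_i` to `v_{i+1}` keeps the number of pendants and changes only
the terms with `b = i`, each going from `2 ^ k_i` to `1` since `k` vanishes below `i`, and those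
with `a = i`, each multiplied by `2 ^ k_i`. So `χ(T*) - χ(T) = (2 ^ k_i - 1) (W - i)` with
`W = ∑_{i < b ≤ d+1} 2 ^ (k_{i+1} + ⋯ + k_b) ≥ d + 1 - i ≥ i`, and equality holds exactly when
no pendants lie beyond `v_i` and `d + 1 = 2 i`.
-/

open Finset

namespace Caterpillar

abbrev Pendant (d : ℕ) (k : ℕ → ℕ) := Σ l : Fin (d + 1), Fin (k ((l : ℕ) + 1))

abbrev Vertex (d : ℕ) (k : ℕ → ℕ) := Fin (d + 1) ⊕ Pendant d k

variable {d : ℕ} {k : ℕ → ℕ}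

def spinePos : Vertex d k → ℕ
  | .inl v => v
  | .inr p => p.1

lemma adj_inr_iff {p : Pendant d k} {v : Vertex d k} :
    (caterpillar d k).Adj (.inr p) v ↔ v = .inl p.1 := by
  cases v <;> simp [caterpillar, eq_comm]

lemma spinePos_le_of_adj {u v : Vertex d k} (h : (caterpillar d k).Adj u v) :
    spinePos u ≤ spinePos v + 1 := by
  rcases u with a | p <;> rcases v with b | q
  · change (a : ℕ) + 1 = b ∨ (b : ℕ) + 1 = a at h
    simp only [spinePos]; omega
  · change q.1 = a at h
    simp only [spinePos, ← h]; omega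
  · change p.1 = b at h
    simp only [spinePos, h]; omega
  · exact h.elim

lemma exists_mem_support_spinePos_eq {S : Set (Vertex d k)} {u v : S}
    (w : ((caterpillar d k).induce S).Walk u v) {c : ℕ}
    (huc : spinePos u.1 ≤ c) (hcv : c ≤ spinePos v.1) :
    ∃ x ∈ w.support, spinePos x.1 = c := by
  induction w with
  | nil => exact ⟨_, Walk.start_mem_support _, le_antisymm huc hcv⟩
  | @cons u m v hadj w ih =>
    by_cases hmc : spinePos m.1 ≤ c
    · obtain ⟨x, hx, hxc⟩ := ih hmc hcv
      exact ⟨x, w.support_subset_support_cons hadj hx, hxc⟩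
    · have := spinePos_le_of_adj (show (caterpillar d k).Adj m.1 u.1 from hadj.symm)
      exact ⟨u, Walk.start_mem_support _, by omega⟩

variable {S : Finset (Vertex d k)}

lemma inl_mem_of_inr_mem (hS : (caterpillar d k).IsSubtree S) {p : Pendant d k}
    (hp : .inr p ∈ S) {v : Vertex d k} (hv : v ∈ S) (hvp : v ≠ .inr p) : .inl p.1 ∈ S := by
  obtain ⟨w⟩ := hS.2.preconnected ⟨.inr p, hp⟩ ⟨v, hv⟩
  have hnil : ¬ w.Nil := fun h => hvp (congrArg Subtype.val h.eq).symm
  have hsnd := adj_inr_iff.mp (w.adj_snd hnil)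
  exact hsnd ▸ w.snd.2

lemma inl_mem_of_le_of_le (hS : (caterpillar d k).IsSubtree S) {a b c : Fin (d + 1)}
    (ha : .inl a ∈ S) (hb : .inl b ∈ S) (hac : a ≤ c) (hcb : c ≤ b) : .inl c ∈ S := by
  obtain ⟨w⟩ := hS.2.preconnected ⟨.inl a, ha⟩ ⟨.inl b, hb⟩
  obtain ⟨⟨x, hx⟩, -, hxc⟩ := exists_mem_support_spinePos_eq w (c := c) hac hcb
  rcases x with e | p
  · rwa [show c = e from Fin.ext hxc.symm]
  · rw [show c = p.1 from Fin.ext hxc.symm]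
    exact inl_mem_of_inr_mem hS hx ha Sum.inl_ne_inr

lemma eq_singleton_of_toLeft_eq_empty (hS : (caterpillar d k).IsSubtree S)
    (hL : S.toLeft = ∅) : ∃ p, S = {.inr p} := by
  have hno : ∀ a, .inl a ∉ S := fun a ha => by simpa [hL] using mem_toLeft.mpr ha
  obtain ⟨v | p, hv⟩ := hS.1
  · exact (hno v hv).elim
  refine ⟨p, eq_singleton_iff_unique_mem.mpr ⟨hv, fun u hu => ?_⟩⟩
  by_contra hup
  exact hno _ (inl_mem_of_inr_mem hS hv hu hup)

/-- The spine segment `v_{a+1}, …, v_b`. -/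
def spineSegment (d a b : ℕ) : Finset (Fin (d + 1)) := univ.filter fun v => (v : ℕ) ∈ Ico a b

def pendantsOn (d : ℕ) (k : ℕ → ℕ) (a b : ℕ) : Finset (Pendant d k) :=
  univ.filter fun p => (p.1 : ℕ) ∈ Ico a b

def segments (n : ℕ) : Finset (Σ _ : ℕ, ℕ) := (range n).sigma fun a => Ioc a n

lemma reachable_inl_of_le {S : Set (Vertex d k)} {a c : Fin (d + 1)} (hac : a ≤ c)
    (hS : ∀ x, a ≤ x → x ≤ c → .inl x ∈ S) :
    ((caterpillar d k).induce S).Reachable ⟨.inl a, hS a le_rfl hac⟩ ⟨.inl c, hS c hac le_rfl⟩ := by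
  induction c using Fin.induction with
  | zero => obtain rfl := Fin.le_zero_iff.mp hac; rfl
  | succ c ih =>
    rcases eq_or_lt_of_le hac with rfl | hlt
    · rfl
    have hac' : a ≤ c.castSucc := Fin.le_castSucc_iff.mpr hlt
    have hstep : (caterpillar d k).Adj (.inl c.castSucc) (.inl c.succ) := Or.inl (by simp)
    exact (ih hac' fun x h1 h2 => hS x h1 (h2.trans (Fin.castSucc_le_succ c))).trans
      (Adj.reachable (by exact hstep))

lemma isSubtree_singleton_inr (p : Pendant d k) : (caterpillar d k).IsSubtree {.inr p} := by
  refine ⟨singleton_nonempty _, ?_⟩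
  rw [coe_singleton, induce_singleton_eq_top]
  exact connected_top

lemma isSubtree_disjSum {a b : ℕ} (hab : a < b) (hb : b ≤ d + 1) {P : Finset (Pendant d k)}
    (hP : P ⊆ pendantsOn d k a b) :
    (caterpillar d k).IsSubtree ((spineSegment d a b).disjSum P) := by
  set S := (spineSegment d a b).disjSum P
  have hspine (x : Fin (d + 1)) : .inl x ∈ S ↔ (x : ℕ) ∈ Ico a b := by simp [S, spineSegment]
  let a' : Fin (d + 1) := ⟨a, by omega⟩
  have ha' : .inl a' ∈ S := (hspine a').2 (by simp [a', hab])
  have hreach (c : Fin (d + 1)) (hc : .inl c ∈ S) :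
      ((caterpillar d k).induce S).Reachable ⟨_, ha'⟩ ⟨_, hc⟩ := by
    have hac : a' ≤ c := by simpa [a', Fin.le_def] using (mem_Ico.mp ((hspine c).1 hc)).1
    refine reachable_inl_of_le hac fun x h1 h2 => (hspine x).2 ?_
    have := (hspine c).1 hc
    simp only [mem_Ico, Fin.le_def, a'] at this h1 h2 ⊢
    omega
  refine ⟨⟨_, ha'⟩, (connected_iff_exists_forall_reachable _).mpr ⟨⟨_, ha'⟩, ?_⟩⟩
  rintro ⟨c | p, hv⟩
  · exact hreach c hv
  · have hpP : p ∈ P := by simpa [S] using hv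
    have hbase : .inl p.1 ∈ S := (hspine _).2 (by simpa [pendantsOn] using hP hpP)
    have hadj : (caterpillar d k).Adj (.inl p.1) (.inr p) := rfl
    exact (hreach _ hbase).trans (Adj.reachable (by exact hadj))

lemma exists_segment_of_isSubtree (hS : (caterpillar d k).IsSubtree S) (hL : S.toLeft.Nonempty) :
    ∃ s ∈ segments (d + 1),
      S.toLeft = spineSegment d s.1 s.2 ∧ S.toRight ⊆ pendantsOn d k s.1 s.2 := by
  set a := S.toLeft.min' hL
  set b := S.toLeft.max' hL
  have ha : .inl a ∈ S := mem_toLeft.mp (min'_mem _ _)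
  have hb : .inl b ∈ S := mem_toLeft.mp (max'_mem _ _)
  have hL_iff (x : Fin (d + 1)) : x ∈ S.toLeft ↔ a ≤ x ∧ x ≤ b :=
    ⟨fun hx => ⟨min'_le _ _ hx, le_max' _ _ hx⟩,
      fun hx => mem_toLeft.mpr (inl_mem_of_le_of_le hS ha hb hx.1 hx.2)⟩
  have hab : a ≤ b := min'_le _ _ (max'_mem _ _)
  refine ⟨⟨(a : ℕ), (b : ℕ) + 1⟩, ?_, ?_, fun p hp => ?_⟩
  · simp only [segments, mem_sigma, mem_range, mem_Ioc, Fin.le_def] at hab ⊢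
    omega
  · ext x
    rw [hL_iff]
    simp only [spineSegment, mem_filter, mem_univ, true_and, mem_Ico, Fin.le_def]
    omega
  · have hbase := (hL_iff _).1 <| mem_toLeft.mpr <|
      inl_mem_of_inr_mem hS (mem_toRight.mp hp) ha Sum.inl_ne_inr
    simp only [pendantsOn, mem_filter, mem_univ, true_and, mem_Ico, Fin.le_def] at hbase ⊢
    omega

theorem isSubtree_iff : (caterpillar d k).IsSubtree S ↔
    (∃ p, S = {.inr p}) ∨
      ∃ s ∈ segments (d + 1), ∃ P ⊆ pendantsOn d k s.1 s.2,
        S = (spineSegment d s.1 s.2).disjSum P := by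
  constructor
  · intro hS
    rcases S.toLeft.eq_empty_or_nonempty with hL | hL
    · exact .inl (eq_singleton_of_toLeft_eq_empty hS hL)
    · obtain ⟨s, hs, hLs, hR⟩ := exists_segment_of_isSubtree hS hL
      exact .inr ⟨s, hs, _, hR, eq_disjSum_iff.mpr ⟨hLs, rfl⟩⟩
  · rintro (⟨p, rfl⟩ | ⟨⟨a, b⟩, hs, P, hP, rfl⟩)
    · exact isSubtree_singleton_inr p
    · simp only [segments, mem_sigma, mem_range, mem_Ioc] at hs
      exact isSubtree_disjSum hs.2.1 hs.2.2 hP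

lemma spineSegment_injOn :
    Set.InjOn (fun s : Σ _ : ℕ, ℕ => spineSegment d s.1 s.2) (segments (d + 1)) := by
  rintro ⟨a, b⟩ hs ⟨a', b'⟩ ht h
  simp only [segments, coe_sigma, Set.mem_sigma_iff, coe_range, Set.mem_Iio, coe_Ioc,
    Set.mem_Ioc] at hs ht
  have key (x : ℕ) (hx : x < d + 1) : x ∈ Ico a b ↔ x ∈ Ico a' b' := by
    simpa [spineSegment] using congrArg (⟨x, hx⟩ ∈ ·) h
  have h1 := key a (by omega)
  have h2 := key a' (by omega)
  have h3 := key (b - 1) (by omega)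
  have h4 := key (b' - 1) (by omega)
  simp only [mem_Ico] at h1 h2 h3 h4
  simp only [Sigma.mk.injEq, heq_eq_eq]
  omega

theorem subtreeCount_eq_card_add_sum : (caterpillar d k).subtreeCount =
    Fintype.card (Pendant d k) + ∑ s ∈ segments (d + 1), 2 ^ #(pendantsOn d k s.1 s.2) := by
  classical
  let singletons := univ.image fun p : Pendant d k => ({.inr p} : Finset (Vertex d k))
  let pieces (s : Σ _ : ℕ, ℕ) :=
    (pendantsOn d k s.1 s.2).powerset.image (spineSegment d s.1 s.2).disjSum
  have hsubtrees : univ.filter (caterpillar d k).IsSubtree =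
      singletons ∪ (segments (d + 1)).biUnion pieces := by
    ext S
    simp [singletons, pieces, isSubtree_iff, eq_comm]
  have hdisj : Disjoint singletons ((segments (d + 1)).biUnion pieces) := by
    simp only [singletons, pieces, Finset.disjoint_left, mem_image, mem_biUnion]
    rintro _ ⟨p, -, rfl⟩ ⟨⟨a, b⟩, hs, P, -, h⟩
    simp only [segments, mem_sigma, mem_range, mem_Ioc] at hs
    simpa [spineSegment, hs.2.1] using congrArg (Sum.inl ⟨a, hs.1⟩ ∈ ·) h
  have hpair : (segments (d + 1) : Set (Σ _ : ℕ, ℕ)).PairwiseDisjoint pieces := by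
    intro s hs t ht hst
    simp only [Function.onFun, pieces, Finset.disjoint_left, mem_image]
    rintro _ ⟨P, -, rfl⟩ ⟨Q, -, h⟩
    exact hst (spineSegment_injOn hs ht (disjSum_inj.mp h).1.symm)
  rw [subtreeCount, Nat.card_eq_fintype_card, Fintype.card_subtype, hsubtrees,
    card_union_of_disjoint hdisj, card_image_of_injective _ (fun p q h => by simpa using h),
    card_univ, card_biUnion hpair]
  congr 1
  refine sum_congr rfl fun s _ => ?_
  rw [card_image_of_injective _ (fun P Q h => by simpa using h), card_powerset]

lemma map_valEmbedding_spineSegment {a b : ℕ} (hb : b ≤ d + 1) :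
    (spineSegment d a b).map Fin.valEmbedding = Ico a b := by
  ext l
  simp only [spineSegment, mem_map, mem_filter, mem_univ, true_and, Fin.valEmbedding_apply]
  refine ⟨fun ⟨v, hv, hvl⟩ => hvl ▸ hv, fun hl => ⟨⟨l, ?_⟩, hl, rfl⟩⟩
  have := (mem_Ico.mp hl).2
  omega

lemma card_pendantsOn {a b : ℕ} (hb : b ≤ d + 1) :
    #(pendantsOn d k a b) = ∑ l ∈ Ioc a b, k l := by
  have hsigma : pendantsOn d k a b = (spineSegment d a b).sigma fun _ => univ := by
    ext p
    simp [pendantsOn, spineSegment]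
  rw [hsigma, card_sigma, ← Ico_add_one_add_one_eq_Ioc, ← sum_Ico_add',
    ← map_valEmbedding_spineSegment hb, sum_map]
  simp

/-- For `n = d + 1`, the number of subtrees of `caterpillar d k` whose lowest spine vertex is
`v_{a+1}`. -/
def rowSum (n : ℕ) (k : ℕ → ℕ) (a : ℕ) : ℕ := ∑ b ∈ Ioc a n, 2 ^ ∑ l ∈ Ioc a b, k l

theorem subtreeCount_eq_sum_rowSum : (caterpillar d k).subtreeCount =
    ∑ l ∈ Ioc 0 (d + 1), k l + ∑ a ∈ range (d + 1), rowSum (d + 1) k a := by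
  have hall : pendantsOn d k 0 (d + 1) = univ :=
    filter_true_of_mem fun p _ => mem_Ico.mpr ⟨Nat.zero_le _, p.1.2⟩
  rw [subtreeCount_eq_card_add_sum, ← card_univ, ← hall, card_pendantsOn le_rfl, segments,
    sum_sigma]
  refine congrArg _ (sum_congr rfl fun a _ => sum_congr rfl fun b hb => ?_)
  rw [card_pendantsOn (mem_Ioc.mp hb).2]

def movePendants (k : ℕ → ℕ) (i : ℕ) : ℕ → ℕ :=
  fun l => if l = i then 0 else if l = i + 1 then k i + k (i + 1) else k l

variable {i : ℕ}

lemma sum_movePendants_add (s : Finset ℕ) :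
    ∑ l ∈ s, movePendants k i l + (if i ∈ s then k i else 0) =
      ∑ l ∈ s, k l + (if i + 1 ∈ s then k i else 0) := by
  have hpoint (l : ℕ) : movePendants k i l + (if i = l then k i else 0) =
      k l + (if i + 1 = l then k i else 0) := by
    unfold movePendants
    split_ifs <;> subst_vars <;> omega
  have := sum_congr rfl fun l (_ : l ∈ s) => hpoint l
  rwa [sum_add_distrib, sum_add_distrib, sum_ite_eq, sum_ite_eq] at this

lemma sum_movePendants_of_mem_iff {s : Finset ℕ} (hs : i ∈ s ↔ i + 1 ∈ s) :
    ∑ l ∈ s, movePendants k i l = ∑ l ∈ s, k l := by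
  have := sum_movePendants_add (k := k) (i := i) s
  rwa [if_congr hs rfl rfl, add_left_inj] at this

lemma rowSum_movePendants_of_lt {n a : ℕ} (hia : i < a) :
    rowSum n (movePendants k i) a = rowSum n k a :=
  sum_congr rfl fun b _ => by
    rw [sum_movePendants_of_mem_iff (by simp only [mem_Ioc]; omega)]

lemma rowSum_movePendants_self (n : ℕ) :
    rowSum n (movePendants k i) i = 2 ^ k i * rowSum n k i := by
  rw [rowSum, rowSum, mul_sum]
  refine sum_congr rfl fun b hb => ?_
  have := sum_movePendants_add (k := k) (i := i) (Ioc i b)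
  rw [if_neg (by simp), if_pos (by simp only [mem_Ioc] at hb ⊢; omega), add_zero] at this
  rw [this, pow_add, mul_comm]

lemma rowSum_movePendants_add_of_lt {n a : ℕ} (hlow : ∀ l < i, k l = 0) (hai : a < i)
    (hin : i ≤ n) : rowSum n (movePendants k i) a + 2 ^ k i = rowSum n k a + 1 := by
  have hpoint : ∀ b ∈ Ioc a n,
      2 ^ ∑ l ∈ Ioc a b, movePendants k i l + (if i = b then 2 ^ k i else 0) =
        2 ^ ∑ l ∈ Ioc a b, k l + (if i = b then 1 else 0) := by
    intro b hb
    split_ifs with hib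
    · subst hib
      have htop := sum_movePendants_add (k := k) (i := i) (Ioc a i)
      rw [if_pos (by simp [hai]), if_neg (by simp)] at htop
      have hzero : ∑ l ∈ Ioc a i, movePendants k i l = 0 := sum_eq_zero fun l hl => by
        unfold movePendants
        simp only [mem_Ioc] at hl
        split_ifs <;> first | rfl | omega | exact hlow l (by omega)
      rw [hzero, show ∑ l ∈ Ioc a i, k l = k i by omega, pow_zero, add_comm]
    · rw [sum_movePendants_of_mem_iff (by simp only [mem_Ioc]; omega)]
  have hmem : i ∈ Ioc a n := mem_Ioc.mpr ⟨hai, hin⟩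
  have := sum_congr rfl hpoint
  rwa [sum_add_distrib, sum_add_distrib, sum_ite_eq, sum_ite_eq, if_pos hmem, if_pos hmem] at this

lemma sum_rowSum_movePendants {n : ℕ} (hlow : ∀ l < i, k l = 0) (hin : i < n) :
    ∑ a ∈ range n, rowSum n (movePendants k i) a + i * 2 ^ k i + rowSum n k i =
      ∑ a ∈ range n, rowSum n k a + i + 2 ^ k i * rowSum n k i := by
  have hlower : ∑ a ∈ range i, rowSum n (movePendants k i) a + i * 2 ^ k i =
      ∑ a ∈ range i, rowSum n k a + i := by
    have := sum_congr rfl fun a ha =>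
      rowSum_movePendants_add_of_lt (n := n) hlow (mem_range.mp ha) hin.le
    simpa [sum_add_distrib] using this
  have hupper : ∑ a ∈ Ico (i + 1) n, rowSum n (movePendants k i) a =
      ∑ a ∈ Ico (i + 1) n, rowSum n k a :=
    sum_congr rfl fun a ha => rowSum_movePendants_of_lt (mem_Ico.mp ha).1
  rw [← sum_range_add_sum_Ico _ hin.le, ← sum_range_add_sum_Ico _ hin.le,
    sum_eq_sum_Ico_succ_bot hin, sum_eq_sum_Ico_succ_bot hin, hupper,
    rowSum_movePendants_self]
  linarith

lemma sub_le_rowSum (n a : ℕ) : n - a ≤ rowSum n k a := by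
  simpa [rowSum] using card_nsmul_le_sum (Ioc a n) _ 1 fun b _ => Nat.one_le_two_pow

lemma rowSum_eq_sub_iff {n a : ℕ} : rowSum n k a = n - a ↔ ∀ l ∈ Ioc a n, k l = 0 := by
  rw [← Nat.card_Ioc, card_eq_sum_ones, rowSum, eq_comm,
    sum_eq_sum_iff_of_le fun b _ => Nat.one_le_two_pow]
  simp only [@eq_comm _ 1, Nat.pow_eq_one, OfNat.ofNat_ne_one, false_or, sum_eq_zero_iff,
    mem_Ioc]
  exact ⟨fun h l hl => h _ ⟨hl.1.trans_le hl.2, le_rfl⟩ l hl,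
    fun h b hb l hl => h l ⟨hl.1, hl.2.trans hb.2⟩⟩

theorem subtreeCount_movePendants_add (hi : 1 ≤ i) (hid : i ≤ d) (hlow : ∀ l < i, k l = 0) :
    (caterpillar d (movePendants k i)).subtreeCount + i * 2 ^ k i + rowSum (d + 1) k i =
      (caterpillar d k).subtreeCount + i + 2 ^ k i * rowSum (d + 1) k i := by
  have hpend : ∑ l ∈ Ioc 0 (d + 1), movePendants k i l = ∑ l ∈ Ioc 0 (d + 1), k l :=
    sum_movePendants_of_mem_iff (by simp only [mem_Ioc]; omega)
  rw [subtreeCount_eq_sum_rowSum, subtreeCount_eq_sum_rowSum, hpend]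
  linarith [sum_rowSum_movePendants (n := d + 1) hlow (by omega)]

theorem subtreeCount_movePendants (hi : 1 ≤ i) (hhalf : 2 * i ≤ d + 1)
    (hlow : ∀ l < i, k l = 0) :
    (caterpillar d (movePendants k i)).subtreeCount =
      (caterpillar d k).subtreeCount + (2 ^ k i - 1) * (rowSum (d + 1) k i - i) := by
  have hW : i ≤ rowSum (d + 1) k i := le_trans (by omega) (sub_le_rowSum (d + 1) i)
  have hadd := subtreeCount_movePendants_add (d := d) hi (by omega) hlow
  zify [hW, Nat.one_le_two_pow] at hadd ⊢
  linear_combination hadd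

end Caterpillar

open Caterpillar in
theorem third_transformation_subtree_count_general (d i : ℕ) (k : ℕ → ℕ)
    (hi : 1 ≤ i) (hki : 1 ≤ k i) (hhalf : 2 * i ≤ d + 1)
    (hlow : ∀ l, l < i → k l = 0) (hhigh : ∀ l, d < l → k l = 0) :
    (caterpillar d k).subtreeCount ≤
        (caterpillar d
          (fun l => if l = i then 0 else if l = i + 1 then k i + k (i + 1) else k l)).subtreeCount ∧
      ((caterpillar d k).subtreeCount =
          (caterpillar d
            (fun l => if l = i then 0 else if l = i + 1 then k i + k (i + 1) else k l)).subtreeCount ↔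
        (∀ l, i < l → k l = 0) ∧ Odd d ∧ 2 * i = d + 1) := by
  change _ ≤ (caterpillar d (movePendants k i)).subtreeCount ∧
    (_ = (caterpillar d (movePendants k i)).subtreeCount ↔ _)
  have hmoved : 2 ^ k i - 1 ≠ 0 := by
    have := Nat.pow_le_pow_right two_pos hki
    omega
  have hW := sub_le_rowSum (k := k) (d + 1) i
  have hbeyond : (∀ l ∈ Ioc i (d + 1), k l = 0) ↔ ∀ l, i < l → k l = 0 :=
    ⟨fun h l hl => (le_or_gt l (d + 1)).elim (fun hld => h l (mem_Ioc.mpr ⟨hl, hld⟩))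
      fun hld => hhigh l (by omega), fun h l hl => h l (mem_Ioc.mp hl).1⟩
  rw [subtreeCount_movePendants hi hhalf hlow, left_eq_add, mul_eq_zero, or_iff_right hmoved,
    ← hbeyond, ← rowSum_eq_sub_iff]
  refine ⟨Nat.le_add_right _ _, fun h => ⟨by omega, ⟨i - 1, by omega⟩, by omega⟩, ?_⟩
  rintro ⟨h, -, h'⟩
  omega

/-- The third tree transformation. For `d > 1`, `1 ≤ i ≤ (d+1)/2`, `k i ≥ 1`, and
pendant counts `k` supported on `{i, …, d}`, let `T = T_d(k_i, …, k_d)` and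
`T* = T_d(k_i + k_{i+1}, k_{i+2}, …, k_d)`. Then `χ(T) ≤ χ(T*)`, with equality iff
`k_{i+1} = ⋯ = k_d = 0`, `d` is odd, and `i = (d+1)/2`. -/
theorem third_transformation_subtree_count (d i : ℕ) (k : ℕ → ℕ)
    (hd : 1 < d) (hi : 1 ≤ i) (hki : 1 ≤ k i) (hhalf : 2 * i ≤ d + 1)
    (hlow : ∀ l, l < i → k l = 0) (hhigh : ∀ l, d < l → k l = 0) :
    (caterpillar d k).subtreeCount ≤
        (caterpillar d
          (fun l => if l = i then 0 else if l = i + 1 then k i + k (i + 1) else k l)).subtreeCount ∧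
      ((caterpillar d k).subtreeCount =
          (caterpillar d
            (fun l => if l = i then 0 else if l = i + 1 then k i + k (i + 1) else k l)).subtreeCount ↔
        (∀ l, i < l → k l = 0) ∧ Odd d ∧ 2 * i = d + 1) :=
  third_transformation_subtree_count_general d i k hi hki hhalf hlow hhigh
end

section
/- Let T₀ be a tree with at least two vertices, let u be a vertex of T₀, and for positive integers s, t let T₀(s, t) be the tree obtained from T₀ by attaching two disjoint pendant paths at u, one with s new vertices and one with t new vertices (i.e., identifying u with one endpoint of a path with s+1 vertices and with one endpoint of a path with t+1 vertices). Then for all integers s ≥ 2 and t ≥ 2, χ(T₀(s, t)) > χ(T₀(s + t − 1, 1)). -/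
open SimpleGraph

/-- The tree obtained from `G` by attaching a pendant path with `r` new vertices at
the vertex `u` (i.e. identifying `u` with one endpoint of a path with `r + 1`
vertices). -/
def addPath {V : Type*} (G : SimpleGraph V) (u : V) (r : ℕ) :
    SimpleGraph (V ⊕ Fin r) where
  Adj a b :=
    match a, b with
    | Sum.inl a, Sum.inl b => G.Adj a b
    | Sum.inl a, Sum.inr j => a = u ∧ (j : ℕ) = 0
    | Sum.inr j, Sum.inl b => b = u ∧ (j : ℕ) = 0
    | Sum.inr i, Sum.inr j => (i : ℕ) + 1 = j ∨ (j : ℕ) + 1 = i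
  symm := by
    refine ⟨?_⟩
    rintro (a | a) (b | b) h
    · exact h.symm
    · exact h
    · exact h
    · exact Or.symm h
  loopless := by
    refine ⟨?_⟩
    rintro (a | a) h
    · exact G.irrefl h
    · omega

/-!
Removing the bridge `uv` of `G +ᵤᵥ H = bridgeSum G H u v` (the disjoint union of `G` and `H`
plus the edge `uv`) splits every subtree into a subtree of `G`, a subtree of `H`, or a subtree
of `G` through `u` together with a subtree of `H` through `v`. Writing `χᵤ` for the number of
subtrees through `u` (`rootedSubtreeCount`), this gives `χ(G +ᵤᵥ H) = χ(G) + χ(H) + χᵤ(G) χᵥ(H)` and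
`χᵤ(G +ᵤᵥ H) = χᵤ(G) (χᵥ(H) + 1)`. Attaching a pendant path with `r` vertices at `u` is the
bridge sum with the path `Pᵣ` attached at an end, and the same formulas give
`χ(Pᵣ) = r(r+1)/2` and `χ_end(Pᵣ) = r`. Hence, with `f = χᵤ(T₀)`,
`χ(T₀(s,t)) - χ(T₀(s+t-1,1)) = (s-1)(t-1)(f-1)`, and `f ≥ 2` since `{u}` and `{u, w}` for a
neighbour `w` of `u` are subtrees.
-/

lemma disjoint_pred_iff {α : Type*} {p q : α → Prop} : Disjoint p q ↔ ∀ x, p x → ¬ q x := by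
  simp [Pi.disjoint_iff, Prop.disjoint_iff]

namespace SimpleGraph

variable {V V' W : Type*}

noncomputable def rootedSubtreeCount (G : SimpleGraph V) (u : V) : ℕ :=
  Nat.card {S : Finset V // G.IsSubtree S ∧ u ∈ S}

lemma IsSubtree.of_preconnected {G : SimpleGraph V} {S : Finset V}
    (h : (G.induce (S : Set V)).Preconnected) (hS : S.Nonempty) : G.IsSubtree S :=
  ⟨hS, { preconnected := h, nonempty := hS.to_subtype }⟩

lemma isSubtree_iff_eq_univ [Fintype V] [Unique V] (G : SimpleGraph V) (S : Finset V) :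
    G.IsSubtree S ↔ S = Finset.univ := by
  refine ⟨fun h => h.1.eq_univ, ?_⟩
  rintro rfl
  exact ⟨Finset.univ_nonempty, @Connected.of_subsingleton _ _ Finset.univ_nonempty.to_subtype _⟩

lemma subtreeCount_of_unique [Fintype V] [Unique V] (G : SimpleGraph V) : G.subtreeCount = 1 :=
  (Nat.card_congr (Equiv.subtypeEquivRight (isSubtree_iff_eq_univ G))).trans Nat.card_unique

lemma rootedSubtreeCount_of_unique [Fintype V] [Unique V] (G : SimpleGraph V) (u : V) :
    G.rootedSubtreeCount u = 1 :=
  (Nat.card_congr (Equiv.subtypeEquivRight fun S => by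
    rw [isSubtree_iff_eq_univ, and_iff_left_iff_imp]
    rintro rfl
    exact Finset.mem_univ u)).trans Nat.card_unique

lemma Iso.isSubtree_map_iff {G : SimpleGraph V} {G' : SimpleGraph V'} (e : G ≃g G')
    (S : Finset V) : G'.IsSubtree (S.map e.toEquiv.toEmbedding) ↔ G.IsSubtree S := by
  have e' : G.induce (S : Set V) ≃g G'.induce (S.map e.toEquiv.toEmbedding : Set V') :=
    e.induce (by rw [Finset.coe_map]; exact e.injective.injOn.bijOn_image)
  simp only [IsSubtree, Finset.map_nonempty, e'.connected_iff]

lemma Iso.subtreeCount_eq {G : SimpleGraph V} {G' : SimpleGraph V'} (e : G ≃g G') :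
    G.subtreeCount = G'.subtreeCount :=
  Nat.card_congr (e.toEquiv.finsetCongr.subtypeEquiv fun S => (e.isSubtree_map_iff S).symm)

lemma Iso.rootedSubtreeCount_eq {G : SimpleGraph V} {G' : SimpleGraph V'} (e : G ≃g G')
    (u : V) : G.rootedSubtreeCount u = G'.rootedSubtreeCount (e u) :=
  Nat.card_congr (e.toEquiv.finsetCongr.subtypeEquiv fun S =>
    and_congr (e.isSubtree_map_iff S).symm (Finset.mem_map' e.toEquiv.toEmbedding).symm)

lemma Reachable.induce_map_of_adj_imp {K : SimpleGraph V'} {G : SimpleGraph V} {T : Set V'}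
    {L : Set V} (f : V' → V)
    (hf : ∀ x ∈ T, ∀ y ∈ T, K.Adj x y → f x = f y ∨ f y ∈ L ∧ G.Adj (f x) (f y))
    {x y : T} (h : (K.induce T).Reachable x y) (hx : f x ∈ L) :
    ∃ hy : f y ∈ L, (G.induce L).Reachable ⟨f x, hx⟩ ⟨f y, hy⟩ := by
  rw [reachable_iff_reflTransGen] at h
  induction h with
  | refl => exact ⟨hx, .rfl⟩
  | @tail y z _ hyz ih =>
    obtain ⟨hy, hxy⟩ := ih
    rcases hf _ y.2 _ z.2 hyz with heq | ⟨hz, hadj⟩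
    · exact ⟨heq ▸ hy, by convert hxy using 2; exact heq.symm⟩
    · exact ⟨hz, hxy.trans (Adj.reachable (G := G.induce L) hadj)⟩

def bridgeSum (G : SimpleGraph V) (H : SimpleGraph W) (u : V) (v : W) : SimpleGraph (V ⊕ W) :=
  (G ⊕g H) ⊔ edge (Sum.inl u) (Sum.inr v)

section bridgeSum

variable {G : SimpleGraph V} {H : SimpleGraph W} {u : V} {v : W}

@[simp]
lemma bridgeSum_adj_inl_inl {a b : V} :
    (bridgeSum G H u v).Adj (.inl a) (.inl b) ↔ G.Adj a b := by
  simp [bridgeSum, edge_adj]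

@[simp]
lemma bridgeSum_adj_inr_inr {a b : W} :
    (bridgeSum G H u v).Adj (.inr a) (.inr b) ↔ H.Adj a b := by
  simp [bridgeSum, edge_adj]

@[simp]
lemma bridgeSum_adj_inl_inr {a : V} {b : W} :
    (bridgeSum G H u v).Adj (.inl a) (.inr b) ↔ a = u ∧ b = v := by
  simp [bridgeSum, edge_adj]

@[simp]
lemma bridgeSum_adj_inr_inl {a : V} {b : W} :
    (bridgeSum G H u v).Adj (.inr b) (.inl a) ↔ b = v ∧ a = u := by
  simp [bridgeSum, edge_adj]

lemma preconnected_induce_toLeft_of_bridgeSum {T : Finset (V ⊕ W)}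
    (hT : ((bridgeSum G H u v).induce (T : Set (V ⊕ W))).Preconnected) :
    (G.induce (T.toLeft : Set V)).Preconnected := by
  rintro ⟨a, ha⟩ ⟨b, hb⟩
  rw [Finset.mem_coe, Finset.mem_toLeft] at ha hb
  refine ((hT ⟨_, ha⟩ ⟨_, hb⟩).induce_map_of_adj_imp (Sum.elim id fun _ => u) ?_
    (by simpa using ha)).2
  rintro (x | x) hx (y | y) hy hxy <;> simp_all

lemma preconnected_induce_toRight_of_bridgeSum {T : Finset (V ⊕ W)}
    (hT : ((bridgeSum G H u v).induce (T : Set (V ⊕ W))).Preconnected) :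
    (H.induce (T.toRight : Set W)).Preconnected := by
  rintro ⟨a, ha⟩ ⟨b, hb⟩
  rw [Finset.mem_coe, Finset.mem_toRight] at ha hb
  refine ((hT ⟨_, ha⟩ ⟨_, hb⟩).induce_map_of_adj_imp (Sum.elim (fun _ => v) id) ?_
    (by simpa using ha)).2
  rintro (x | x) hx (y | y) hy hxy <;> simp_all

/-- A walk inside `T` can only change sides along the bridge. -/
lemma mem_of_reachable_inl_inr_bridgeSum {T : Set (V ⊕ W)} {a : V} {b : W}
    (ha : Sum.inl a ∈ T) (hb : Sum.inr b ∈ T)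
    (h : ((bridgeSum G H u v).induce T).Reachable ⟨_, ha⟩ ⟨_, hb⟩) :
    Sum.inl u ∈ T ∧ Sum.inr v ∈ T := by
  by_contra hT
  suffices ∀ y : T, ((bridgeSum G H u v).induce T).Reachable ⟨_, ha⟩ y → y.1.isLeft by
    simpa using this _ h
  intro y hy
  rw [reachable_iff_reflTransGen] at hy
  induction hy with
  | refl => rfl
  | @tail y z _ hyz ih =>
    obtain ⟨y | y, hy⟩ := y <;> obtain ⟨z | z, hz⟩ := z <;> aesop

lemma connected_induce_image_inl_bridgeSum {L : Set V} (hL : (G.induce L).Connected) :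
    ((bridgeSum G H u v).induce (Sum.inl '' L)).Connected := by
  let φ : G →g bridgeSum G H u v := ⟨Sum.inl, bridgeSum_adj_inl_inl.2⟩
  refine hL.map (induceHom φ (Set.mapsTo_image _ _)) ?_
  rintro ⟨_, a, ha, rfl⟩
  exact ⟨⟨a, ha⟩, rfl⟩

lemma connected_induce_image_inr_bridgeSum {R : Set W} (hR : (H.induce R).Connected) :
    ((bridgeSum G H u v).induce (Sum.inr '' R)).Connected := by
  let φ : H →g bridgeSum G H u v := ⟨Sum.inr, bridgeSum_adj_inr_inr.2⟩
  refine hR.map (induceHom φ (Set.mapsTo_image _ _)) ?_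
  rintro ⟨_, a, ha, rfl⟩
  exact ⟨⟨a, ha⟩, rfl⟩

theorem isSubtree_bridgeSum_disjSum_iff {L : Finset V} {R : Finset W} :
    (bridgeSum G H u v).IsSubtree (L.disjSum R) ↔
      G.IsSubtree L ∧ R = ∅ ∨ L = ∅ ∧ H.IsSubtree R ∨
        (G.IsSubtree L ∧ u ∈ L) ∧ (H.IsSubtree R ∧ v ∈ R) := by
  have hcoe : ((L.disjSum R : Finset (V ⊕ W)) : Set (V ⊕ W)) =
      Sum.inl '' (L : Set V) ∪ Sum.inr '' (R : Set W) := by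
    ext (x | x) <;> simp
  constructor
  · rintro ⟨hne, hconn⟩
    have hL := preconnected_induce_toLeft_of_bridgeSum hconn.preconnected
    have hR := preconnected_induce_toRight_of_bridgeSum hconn.preconnected
    rw [Finset.toLeft_disjSum] at hL
    rw [Finset.toRight_disjSum] at hR
    rcases L.eq_empty_or_nonempty with rfl | ⟨a, ha⟩
    · exact .inr (.inl ⟨rfl, .of_preconnected hR (by simpa using hne)⟩)
    rcases R.eq_empty_or_nonempty with rfl | ⟨b, hb⟩
    · exact .inl ⟨.of_preconnected hL ⟨a, ha⟩, rfl⟩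
    have ha' : Sum.inl a ∈ ((L.disjSum R : Finset (V ⊕ W)) : Set (V ⊕ W)) := by simpa using ha
    have hb' : Sum.inr b ∈ ((L.disjSum R : Finset (V ⊕ W)) : Set (V ⊕ W)) := by simpa using hb
    obtain ⟨hu, hv⟩ := mem_of_reachable_inl_inr_bridgeSum ha' hb' (hconn.preconnected _ _)
    exact .inr (.inr ⟨⟨.of_preconnected hL ⟨a, ha⟩, by simpa using hu⟩,
      ⟨.of_preconnected hR ⟨b, hb⟩, by simpa using hv⟩⟩)
  · rintro (⟨hL, rfl⟩ | ⟨rfl, hR⟩ | ⟨⟨hL, hu⟩, hR, hv⟩)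
    · refine ⟨by rw [Finset.disjSum_empty]; exact hL.1.map, ?_⟩
      rw [hcoe, Finset.coe_empty, Set.image_empty, Set.union_empty]
      exact connected_induce_image_inl_bridgeSum hL.2
    · refine ⟨by rw [Finset.empty_disjSum]; exact hR.1.map, ?_⟩
      rw [hcoe, Finset.coe_empty, Set.image_empty, Set.empty_union]
      exact connected_induce_image_inr_bridgeSum hR.2
    · refine ⟨⟨_, Finset.inl_mem_disjSum.2 hu⟩, ?_⟩
      rw [hcoe]
      exact connected_induce_union
        (connected_induce_image_inl_bridgeSum hL.2).preconnected
        (connected_induce_image_inr_bridgeSum hR.2).preconnected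
        (Set.mem_image_of_mem _ hu) (Set.mem_image_of_mem _ hv)
        (bridgeSum_adj_inl_inr.2 ⟨rfl, rfl⟩)

lemma isSubtree_bridgeSum_disjSum_and_inl_mem_iff {L : Finset V} {R : Finset W} :
    (bridgeSum G H u v).IsSubtree (L.disjSum R) ∧ Sum.inl u ∈ L.disjSum R ↔
      (G.IsSubtree L ∧ u ∈ L) ∧ (H.IsSubtree R ∧ v ∈ R ∨ R = ∅) := by
  rw [isSubtree_bridgeSum_disjSum_iff, Finset.inl_mem_disjSum]
  constructor
  · rintro ⟨⟨hL, rfl⟩ | ⟨rfl, -⟩ | ⟨hL, hR⟩, hu⟩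
    exacts [⟨⟨hL, hu⟩, .inr rfl⟩, absurd hu (Finset.notMem_empty u), ⟨hL, .inl hR⟩]
  · rintro ⟨⟨hL, hu⟩, hR | rfl⟩
    exacts [⟨.inr (.inr ⟨⟨hL, hu⟩, hR⟩), hu⟩, ⟨.inl ⟨hL, rfl⟩, hu⟩]

variable (G H u v) [Finite W]

theorem subtreeCount_bridgeSum [Finite V] :
    (bridgeSum G H u v).subtreeCount =
      G.subtreeCount + H.subtreeCount + G.rootedSubtreeCount u * H.rootedSubtreeCount v := by
  classical
  have hAB : Disjoint (fun p : Finset V × Finset W => G.IsSubtree p.1 ∧ p.2 = ∅)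
      fun p => p.1 = ∅ ∧ H.IsSubtree p.2 ∨
        (G.IsSubtree p.1 ∧ u ∈ p.1) ∧ (H.IsSubtree p.2 ∧ v ∈ p.2) := by
    rw [disjoint_pred_iff]
    rintro ⟨L, R⟩ ⟨hL, rfl⟩ (⟨rfl, -⟩ | ⟨-, -, hv⟩)
    exacts [Finset.not_nonempty_empty hL.1, Finset.notMem_empty v hv]
  have hBC : Disjoint (fun p : Finset V × Finset W => p.1 = ∅ ∧ H.IsSubtree p.2)
      fun p => (G.IsSubtree p.1 ∧ u ∈ p.1) ∧ (H.IsSubtree p.2 ∧ v ∈ p.2) := by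
    rw [disjoint_pred_iff]
    rintro ⟨L, R⟩ ⟨rfl, -⟩ ⟨⟨-, hu⟩, -⟩
    exact Finset.notMem_empty u hu
  have e : {T // (bridgeSum G H u v).IsSubtree T} ≃
      {L // G.IsSubtree L} × {R : Finset W // R = ∅} ⊕
        {L : Finset V // L = ∅} × {R // H.IsSubtree R} ⊕
          {L // G.IsSubtree L ∧ u ∈ L} × {R // H.IsSubtree R ∧ v ∈ R} :=
    ((Finset.sumEquiv.symm.toEquiv.subtypeEquiv fun _ => Iff.rfl).symm.trans
      (Equiv.subtypeEquivRight fun _ => isSubtree_bridgeSum_disjSum_iff)).trans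
      ((subtypeOrEquiv _ _ hAB).trans
        (Equiv.sumCongr (Equiv.subtypeProdEquivProd (p := G.IsSubtree) (q := (· = ∅)))
          ((subtypeOrEquiv _ _ hBC).trans
            (Equiv.sumCongr (Equiv.subtypeProdEquivProd (p := (· = ∅)) (q := H.IsSubtree))
              (Equiv.subtypeProdEquivProd (p := fun L => G.IsSubtree L ∧ u ∈ L)
                (q := fun R => H.IsSubtree R ∧ v ∈ R))))))
  rw [subtreeCount, Nat.card_congr e]
  simp [Nat.card_sum, Nat.card_prod, subtreeCount, rootedSubtreeCount, add_assoc]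

theorem rootedSubtreeCount_bridgeSum_inl :
    (bridgeSum G H u v).rootedSubtreeCount (Sum.inl u) =
      G.rootedSubtreeCount u * (H.rootedSubtreeCount v + 1) := by
  classical
  have hdisj : Disjoint (fun R : Finset W => H.IsSubtree R ∧ v ∈ R) (· = ∅) := by
    rw [disjoint_pred_iff]
    rintro R ⟨-, hv⟩ rfl
    exact Finset.notMem_empty v hv
  have e : {T // (bridgeSum G H u v).IsSubtree T ∧ Sum.inl u ∈ T} ≃
      {L // G.IsSubtree L ∧ u ∈ L} ×
        ({R // H.IsSubtree R ∧ v ∈ R} ⊕ {R : Finset W // R = ∅}) :=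
    ((Finset.sumEquiv.symm.toEquiv.subtypeEquiv fun _ => Iff.rfl).symm.trans
      (Equiv.subtypeEquivRight fun _ => isSubtree_bridgeSum_disjSum_and_inl_mem_iff)).trans
      (Equiv.subtypeProdEquivProd.trans (Equiv.prodCongr (.refl _) (subtypeOrEquiv _ _ hdisj)))
  rw [rootedSubtreeCount, Nat.card_congr e]
  simp [Nat.card_sum, Nat.card_prod, rootedSubtreeCount]

end bridgeSum

lemma addPath_succ_eq_bridgeSum (G : SimpleGraph V) (u : V) (r : ℕ) :
    addPath G u (r + 1) = bridgeSum G (pathGraph (r + 1)) u 0 := by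
  ext (a | a) (b | b) <;>
    simp only [addPath, bridgeSum_adj_inl_inl, bridgeSum_adj_inl_inr, bridgeSum_adj_inr_inl,
      bridgeSum_adj_inr_inr, pathGraph_adj, Fin.ext_iff, Fin.val_zero, and_comm]

def pathGraphSuccIso (n : ℕ) :
    bridgeSum (pathGraph 1) (pathGraph (n + 1)) 0 0 ≃g pathGraph (n + 2) where
  toEquiv := finSumFinEquiv.trans (finCongr (Nat.add_comm 1 (n + 1)))
  map_rel_iff' := by
    rintro (a | a) (b | b) <;>
      simp only [Equiv.trans_apply, finSumFinEquiv_apply_left, finSumFinEquiv_apply_right,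
        finCongr_apply, pathGraph_adj, Fin.val_cast, Fin.val_castAdd, Fin.val_natAdd,
        bridgeSum_adj_inl_inl, bridgeSum_adj_inl_inr, bridgeSum_adj_inr_inl,
        bridgeSum_adj_inr_inr, Fin.ext_iff, Fin.val_zero] <;> omega

theorem rootedSubtreeCount_pathGraph_zero (n : ℕ) :
    (pathGraph (n + 1)).rootedSubtreeCount 0 = n + 1 := by
  induction n with
  | zero => exact rootedSubtreeCount_of_unique (pathGraph 1) 0
  | succ n ih =>
    rw [← show pathGraphSuccIso n (Sum.inl 0) = 0 from rfl,
      ← (pathGraphSuccIso n).rootedSubtreeCount_eq, rootedSubtreeCount_bridgeSum_inl,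
      rootedSubtreeCount_of_unique, ih, one_mul]

theorem two_mul_subtreeCount_pathGraph (n : ℕ) :
    2 * (pathGraph (n + 1)).subtreeCount = (n + 1) * (n + 2) := by
  induction n with
  | zero => simp [subtreeCount_of_unique]
  | succ n ih =>
    rw [← (pathGraphSuccIso n).subtreeCount_eq, subtreeCount_bridgeSum, subtreeCount_of_unique,
      rootedSubtreeCount_of_unique, rootedSubtreeCount_pathGraph_zero]
    linarith

theorem two_mul_subtreeCount_addPath [Finite V] (G : SimpleGraph V) (u : V) (r : ℕ) :
    2 * (addPath G u (r + 1)).subtreeCount =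
      2 * G.subtreeCount + (r + 1) * (r + 2) + 2 * (r + 1) * G.rootedSubtreeCount u := by
  rw [addPath_succ_eq_bridgeSum, subtreeCount_bridgeSum, rootedSubtreeCount_pathGraph_zero,
    mul_add, mul_add, two_mul_subtreeCount_pathGraph]
  ring

theorem rootedSubtreeCount_addPath (G : SimpleGraph V) (u : V) (r : ℕ) :
    (addPath G u (r + 1)).rootedSubtreeCount (Sum.inl u) = G.rootedSubtreeCount u * (r + 2) := by
  rw [addPath_succ_eq_bridgeSum, rootedSubtreeCount_bridgeSum_inl,
    rootedSubtreeCount_pathGraph_zero]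

theorem two_le_rootedSubtreeCount [Finite V] [Nontrivial V] {G : SimpleGraph V}
    (hG : G.Connected) (u : V) : 2 ≤ G.rootedSubtreeCount u := by
  classical
  obtain ⟨z, hz⟩ := hG.preconnected.exists_adj_of_nontrivial u
  have h1 : G.IsSubtree {u} :=
    ⟨Finset.singleton_nonempty u, by
      rw [Finset.coe_singleton]
      exact Connected.of_subsingleton⟩
  have h2 : G.IsSubtree {u, z} :=
    ⟨Finset.insert_nonempty _ _, by rw [Finset.coe_pair]; exact induce_pair_connected_of_adj hz⟩
  have : Nontrivial {S : Finset V // G.IsSubtree S ∧ u ∈ S} := by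
    refine ⟨⟨{u}, h1, Finset.mem_singleton_self u⟩, ⟨{u, z}, h2, Finset.mem_insert_self u _⟩, ?_⟩
    intro h
    exact hz.ne (by simpa [eq_comm] using congrArg (fun S : {S // _} => z ∈ S.1) h)
  exact Finite.one_lt_card_iff_nontrivial.mpr this

end SimpleGraph

/-- The fourth tree transformation. Let `T₀` be a tree with at least two vertices,
`u` a vertex of `T₀`, and `T₀(s, t)` the tree obtained from `T₀` by attaching two
disjoint pendant paths at `u`, with `s` and `t` new vertices respectively. Then for
all `s ≥ 2` and `t ≥ 2`, `χ(T₀(s, t)) > χ(T₀(s + t - 1, 1))`. -/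
theorem fourth_transformation_subtree_count {V : Type*} [Fintype V]
    (G : SimpleGraph V) (hG : G.IsTree) (hV : 2 ≤ Fintype.card V)
    (u : V) (s t : ℕ) (hs : 2 ≤ s) (ht : 2 ≤ t) :
    (addPath (addPath G u (s + t - 1)) (Sum.inl u) 1).subtreeCount <
      (addPath (addPath G u s) (Sum.inl u) t).subtreeCount := by
  have : Nontrivial V := Fintype.one_lt_card_iff_nontrivial.mp hV
  obtain ⟨f, hf⟩ : ∃ f, G.rootedSubtreeCount u = f + 2 :=
    ⟨_, (Nat.sub_add_cancel (two_le_rootedSubtreeCount hG.connected u)).symm⟩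
  obtain ⟨a, rfl⟩ : ∃ a, s = a + 1 := ⟨s - 1, by omega⟩
  obtain ⟨b, rfl⟩ : ∃ b, t = b + 1 := ⟨t - 1, by omega⟩
  rw [show a + 1 + (b + 1) - 1 = a + b + 1 by omega]
  have hB := two_mul_subtreeCount_addPath (addPath G u (a + 1)) (Sum.inl u) b
  have hA := two_mul_subtreeCount_addPath (addPath G u (a + b + 1)) (Sum.inl u) 0
  rw [two_mul_subtreeCount_addPath G u a, rootedSubtreeCount_addPath G u a, hf] at hB
  rw [two_mul_subtreeCount_addPath G u (a + b), rootedSubtreeCount_addPath G u (a + b), hf] at hA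
  have hab : 0 < a * b * (f + 1) := Nat.mul_pos (Nat.mul_pos (by omega) (by omega)) f.succ_pos
  nlinarith
end
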